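/- arXiv:1912.12519 — 8 statements merged into one kernel-verified Lean document; each statement's English description precedes it below -/
import Mathlib

section
/- For every positive integer n there exists δ > 0 such that for every n-dimensional real Banach space X there is a point x in the unit sphere of X with the property that for every h in the unit sphere of X, max{‖x + h‖, ‖x − h‖} ≥ 1 + δ. In fact one may take δ = (1 + 1/n)^{1/2} − 1. -/
/-!
Maximising `det A` over the compact convex set of positive semidefinite matrices `A` whose
quadratic form `q_A` (in some coordinates on `X`) lies below `‖·‖²` gives John's ellipsoid: the
first-order optimality condition against the rank-one competitors `f ⊗ f` with `‖f‖ ≤ 1` reads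
`f A⁻¹ f ≤ n`, and Cauchy–Schwarz for `q_A` turns this into `‖x‖² ≤ n q_A(x)`.

Given a quadratic form `q` with `q ≤ ‖·‖² ≤ n q`, take a unit vector `x` maximising `q` on the
sphere, so that `q z ≤ q x ‖z‖²` for all `z`. For a unit vector `h` the parallelogram law gives
`q (x + h) + q (x - h) = 2 q x + 2 q h ≥ 2 q x + 2 / n`, so for one sign
`q x ‖x ± h‖² ≥ q x + 1 / n ≥ q x (1 + 1 / n)`, using `q x ≤ 1`.
-/

open Matrix Filter Topology Set

section
variable {ι : Type*} [Fintype ι] [DecidableEq ι]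

open Polynomial in
theorem Matrix.trace_nonpos_of_eventually_det_one_add_smul_le (M : Matrix ι ι ℝ)
    (h : ∀ᶠ t in 𝓝[>] (0 : ℝ), (1 + t • M).det ≤ 1) : M.trace ≤ 0 := by
  set r : ℝ → ℝ := fun t => (det (1 + (X : ℝ[X]) • M.map C)).divX.divX.eval t
  have hr : Tendsto (fun t => -(r t * t)) (𝓝[>] 0) (𝓝 0) := by
    have : Continuous fun t => -(r t * t) := by fun_prop
    simpa using (this.tendsto 0).mono_left nhdsWithin_le_nhds
  refine ge_of_tendsto hr ?_
  filter_upwards [h, self_mem_nhdsWithin] with t ht (htpos : 0 < t)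
  rw [det_one_add_smul] at ht
  refine le_of_mul_le_mul_right ?_ htpos
  nlinarith

theorem Matrix.trace_inv_mul_le_card_of_eventually_det_le {A P : Matrix ι ι ℝ} (hA : 0 < A.det)
    (h : ∀ᶠ t in 𝓝[>] (0 : ℝ), (A + t • (P - A)).det ≤ A.det) :
    (A⁻¹ * P).trace ≤ Fintype.card ι := by
  have hU : IsUnit A.det := hA.ne'.isUnit
  set M := A⁻¹ * (P - A) with hM
  have hfac (t : ℝ) : A + t • (P - A) = A * (1 + t • M) := by
    rw [mul_add, mul_one, mul_smul_comm, ← mul_assoc, mul_nonsing_inv _ hU, one_mul]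
  have htrM : M.trace ≤ 0 := M.trace_nonpos_of_eventually_det_one_add_smul_le <| h.mono
    fun t ht => le_of_mul_le_mul_left (by rwa [mul_one, ← det_mul, ← hfac]) hA
  have htr : M.trace = (A⁻¹ * P).trace - Fintype.card ι := by
    rw [hM, mul_sub, trace_sub, nonsing_inv_mul _ hU, trace_one]
  linarith

theorem Matrix.PosSemidef.dotProduct_mulVec_sq_le {A : Matrix ι ι ℝ} (hA : A.PosSemidef)
    (v w : ι → ℝ) : (v ⬝ᵥ A *ᵥ w) ^ 2 ≤ (v ⬝ᵥ A *ᵥ v) * (w ⬝ᵥ A *ᵥ w) := by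
  have hsymm : LinearMap.IsSymm (toBilin' A) := LinearMap.BilinForm.isSymm_iff.mp <|
    isSymm_toBilin'_iff_isSymm.mpr (isHermitian_iff_isSymm.mp hA.isHermitian)
  simpa [toBilin'_apply'] using (toBilin' A).apply_sq_le_of_symm
    (fun x => by simpa [toBilin'_apply'] using hA.dotProduct_mulVec_nonneg x) hsymm v w

end

section
variable {ι X : Type*} [Fintype ι] [NormedAddCommGroup X] [NormedSpace ℝ X]

/-- `A ∈ ellipsoidMatrices e` iff the ellipsoid `{x | e x ⬝ᵥ A *ᵥ e x ≤ 1}` contains the unit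
ball of `X`. -/
def ellipsoidMatrices (e : X ≃L[ℝ] (ι → ℝ)) : Set (Matrix ι ι ℝ) :=
  {A | A.PosSemidef ∧ ∀ x, e x ⬝ᵥ A *ᵥ e x ≤ ‖x‖ ^ 2}

variable (e : X ≃L[ℝ] (ι → ℝ))

theorem isClosed_ellipsoidMatrices : IsClosed (ellipsoidMatrices e) := by
  have hform (v w : ι → ℝ) : Continuous fun A : Matrix ι ι ℝ => v ⬝ᵥ A *ᵥ w := by fun_prop
  simp only [ellipsoidMatrices, posSemidef_iff_dotProduct_mulVec, IsHermitian, ofPred_and,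
    ofPred_forall]
  exact ((isClosed_eq continuous_id.matrix_conjTranspose continuous_id).inter
    (isClosed_iInter fun v => isClosed_le continuous_const (hform _ _))).inter
    (isClosed_iInter fun x => isClosed_le (hform _ _) continuous_const)

theorem convex_ellipsoidMatrices : Convex ℝ (ellipsoidMatrices e) := by
  rintro A ⟨hA, hAx⟩ P ⟨hP, hPx⟩ a b ha hb hab
  refine ⟨(hA.smul ha).add (hP.smul hb), fun x => ?_⟩
  simp only [add_mulVec, smul_mulVec, dotProduct_add, dotProduct_smul, smul_eq_mul]
  calc a * (e x ⬝ᵥ A *ᵥ e x) + b * (e x ⬝ᵥ P *ᵥ e x) ≤ a * ‖x‖ ^ 2 + b * ‖x‖ ^ 2 := by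
        gcongr <;> simp [hAx, hPx]
    _ = ‖x‖ ^ 2 := by rw [← add_mul, hab, one_mul]

theorem abs_apply_le_of_mem_ellipsoidMatrices [DecidableEq ι] {A : Matrix ι ι ℝ}
    (hA : A ∈ ellipsoidMatrices e) (i j : ι) :
    |A i j| ≤ ‖(e.symm : (ι → ℝ) →L[ℝ] X)‖ ^ 2 := by
  have hdiag (k : ι) : A k k ≤ ‖(e.symm : (ι → ℝ) →L[ℝ] X)‖ ^ 2 := by
    have h := hA.2 (e.symm (Pi.single k 1))
    have hnorm := (e.symm : (ι → ℝ) →L[ℝ] X).le_opNorm (Pi.single k 1)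
    simp only [ContinuousLinearEquiv.apply_symm_apply, single_dotProduct, mulVec_single_one,
      one_mul, col_apply, Pi.norm_single, norm_one, mul_one] at h hnorm
    exact h.trans (by gcongr; exact hnorm)
  have hcs := hA.1.dotProduct_mulVec_sq_le (Pi.single i 1) (Pi.single j 1)
  simp only [single_dotProduct, mulVec_single_one, one_mul, col_apply] at hcs
  refine abs_le_of_sq_le_sq (hcs.trans ?_) (by positivity)
  rw [sq]
  exact mul_le_mul (hdiag i) (hdiag j) hA.1.diag_nonneg (by positivity)

theorem isCompact_ellipsoidMatrices [DecidableEq ι] : IsCompact (ellipsoidMatrices e) := by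
  set K := ‖(e.symm : (ι → ℝ) →L[ℝ] X)‖ ^ 2
  refine (isCompact_univ_pi fun _ => isCompact_univ_pi fun _ => isCompact_Icc (a := -K) (b := K))
    |>.of_isClosed_subset (isClosed_ellipsoidMatrices e) fun A hA => ?_
  simp only [Set.mem_pi, mem_univ, mem_Icc, forall_const]
  exact fun i j => abs_le.mp (abs_apply_le_of_mem_ellipsoidMatrices e hA i j)

theorem exists_det_pos_mem_ellipsoidMatrices [DecidableEq ι] :
    ∃ A ∈ ellipsoidMatrices e, 0 < A.det := by
  set ε := (Fintype.card ι * ‖(e : X →L[ℝ] (ι → ℝ))‖ ^ 2 + 1)⁻¹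
  have hε : 0 < ε := by positivity
  refine ⟨ε • 1, ⟨PosSemidef.one.smul hε.le, fun x => ?_⟩, by simp [hε]⟩
  have hcoord : e x ⬝ᵥ e x ≤ Fintype.card ι * ‖(e : X →L[ℝ] (ι → ℝ))‖ ^ 2 * ‖x‖ ^ 2 := by
    calc e x ⬝ᵥ e x ≤ ∑ _ : ι, ‖e x‖ ^ 2 := Finset.sum_le_sum fun i _ => by
          have hi := norm_le_pi_norm (e x) i
          rw [Real.norm_eq_abs] at hi
          nlinarith [abs_le.mp hi]
      _ ≤ _ := by
        rw [Finset.sum_const, Finset.card_univ, nsmul_eq_mul, mul_assoc, ← mul_pow]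
        gcongr
        exact (e : X →L[ℝ] (ι → ℝ)).le_opNorm x
  rw [smul_mulVec, one_mulVec, dotProduct_smul, smul_eq_mul]
  calc ε * (e x ⬝ᵥ e x) ≤ ε * ((Fintype.card ι * ‖(e : X →L[ℝ] (ι → ℝ))‖ ^ 2 + 1) * ‖x‖ ^ 2) := by
        gcongr; nlinarith [sq_nonneg ‖x‖]
    _ = ‖x‖ ^ 2 := by rw [← mul_assoc, inv_mul_cancel₀ (by positivity), one_mul]

theorem vecMulVec_mem_ellipsoidMatrices {w : ι → ℝ} (hw : ∀ x, |w ⬝ᵥ e x| ≤ ‖x‖) :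
    vecMulVec w w ∈ ellipsoidMatrices e := by
  refine ⟨by simpa using posSemidef_vecMulVec_self_star w, fun x => ?_⟩
  rw [vecMulVec_mulVec, dotProduct_comm]
  simpa [sq_abs, sq, mul_comm] using pow_le_pow_left₀ (abs_nonneg _) (hw x) 2

section Maximizer

variable [DecidableEq ι] {e} {A : Matrix ι ι ℝ} (hA : A ∈ ellipsoidMatrices e)
  (hmax : IsMaxOn det (ellipsoidMatrices e) A) (hdet : 0 < A.det)
include hA hmax hdet

theorem trace_inv_mul_le_card_of_isMaxOn_det {P : Matrix ι ι ℝ}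
    (hP : P ∈ ellipsoidMatrices e) : (A⁻¹ * P).trace ≤ Fintype.card ι :=
  trace_inv_mul_le_card_of_eventually_det_le hdet <|
    eventually_of_mem (Ioc_mem_nhdsGT zero_lt_one) fun _ ht =>
      hmax ((convex_ellipsoidMatrices e).add_smul_sub_mem hA hP (Ioc_subset_Icc_self ht))

theorem norm_sq_le_card_mul_of_isMaxOn_det (u : X) :
    ‖u‖ ^ 2 ≤ Fintype.card ι * (e u ⬝ᵥ A *ᵥ e u) := by
  obtain ⟨f, hf, hfu⟩ := exists_dual_vector'' ℝ u
  set w : ι → ℝ := fun i => f (e.symm (Pi.single i 1))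
  have hfw (x : X) : f x = w ⬝ᵥ e x := by
    conv_lhs => rw [← e.symm_apply_apply x, ← Finset.univ_sum_single (e x)]
    simp only [map_sum, dotProduct, w]
    refine Finset.sum_congr rfl fun i _ => ?_
    rw [mul_comm, ← smul_eq_mul, ← map_smul, ← map_smul, ← Pi.single_smul', smul_eq_mul, mul_one]
  set v := A⁻¹ *ᵥ w
  have hAv : A *ᵥ v = w := by
    rw [mulVec_mulVec, mul_nonsing_inv _ hdet.ne'.isUnit, one_mulVec]
  have hvw : v ⬝ᵥ w ≤ Fintype.card ι := by
    have hw : ∀ x, |w ⬝ᵥ e x| ≤ ‖x‖ := fun x => by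
      simpa [← hfw] using f.le_of_opNorm_le hf x
    simpa [mul_vecMulVec] using
      trace_inv_mul_le_card_of_isMaxOn_det hA hmax hdet (vecMulVec_mem_ellipsoidMatrices e hw)
  calc ‖u‖ ^ 2 = (e u ⬝ᵥ A *ᵥ v) ^ 2 := by rw [hAv, dotProduct_comm, ← hfw, hfu]; rfl
    _ ≤ (e u ⬝ᵥ A *ᵥ e u) * (v ⬝ᵥ A *ᵥ v) := hA.1.dotProduct_mulVec_sq_le (e u) v
    _ ≤ (e u ⬝ᵥ A *ᵥ e u) * Fintype.card ι := by
      gcongr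
      · simpa using hA.1.dotProduct_mulVec_nonneg (e u)
      · rwa [hAv]
    _ = _ := mul_comm _ _

end Maximizer

end

theorem exists_bilinForm_le_norm_sq_le_finrank_mul (X : Type*) [NormedAddCommGroup X]
    [NormedSpace ℝ X] [FiniteDimensional ℝ X] :
    ∃ B : LinearMap.BilinForm ℝ X, ∀ x, B x x ≤ ‖x‖ ^ 2 ∧ ‖x‖ ^ 2 ≤ Module.finrank ℝ X * B x x := by
  let e : X ≃L[ℝ] (Fin (Module.finrank ℝ X) → ℝ) := (Module.finBasis ℝ X).equivFunL
  obtain ⟨A₀, hA₀, hdet₀⟩ := exists_det_pos_mem_ellipsoidMatrices e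
  obtain ⟨A, hA, hmax⟩ := (isCompact_ellipsoidMatrices e).exists_isMaxOn ⟨A₀, hA₀⟩
    continuous_id.matrix_det.continuousOn
  have hdet : 0 < A.det := hdet₀.trans_le (hmax hA₀)
  refine ⟨(toBilin' A).compl₁₂ (e : X →ₗ[ℝ] _) (e : X →ₗ[ℝ] _), fun x => ?_⟩
  have hlower := norm_sq_le_card_mul_of_isMaxOn_det hA hmax hdet x
  rw [Fintype.card_fin] at hlower
  simpa [toBilin'_apply'] using ⟨hA.2 x, hlower⟩

namespace LinearMap.BilinForm

variable {X : Type*} [NormedAddCommGroup X] [NormedSpace ℝ X] (B : LinearMap.BilinForm ℝ X)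

theorem apply_add_add_apply_sub (x y : X) :
    B (x + y) (x + y) + B (x - y) (x - y) = 2 * B x x + 2 * B y y := by
  simp only [map_add, map_sub, LinearMap.add_apply, LinearMap.sub_apply]
  ring

theorem apply_le_mul_norm_sq_of_isMaxOn_sphere {x : X}
    (hx : IsMaxOn (fun y => B y y) (Metric.sphere 0 1) x) (z : X) : B z z ≤ B x x * ‖z‖ ^ 2 := by
  rcases eq_or_ne z 0 with rfl | hz
  · simp
  have hz' : 0 < ‖z‖ := norm_pos_iff.mpr hz
  have hunit : B (‖z‖⁻¹ • z) (‖z‖⁻¹ • z) ≤ B x x :=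
    hx (show ‖z‖⁻¹ • z ∈ Metric.sphere (0 : X) 1 by simp [norm_smul, hz'.ne'])
  simp only [map_smul, LinearMap.smul_apply, smul_eq_mul] at hunit
  calc B z z = ‖z‖ ^ 2 * (‖z‖⁻¹ * (‖z‖⁻¹ * B z z)) := by field_simp
    _ ≤ ‖z‖ ^ 2 * B x x := by gcongr
    _ = _ := mul_comm _ _

theorem exists_norm_eq_one_forall_sqrt_le_max_norm_add_sub [FiniteDimensional ℝ X]
    [Nontrivial X] {C : ℝ} (hC : 0 < C) (hB : ∀ x, B x x ≤ ‖x‖ ^ 2 ∧ ‖x‖ ^ 2 ≤ C * B x x) :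
    ∃ x : X, ‖x‖ = 1 ∧ ∀ h : X, ‖h‖ = 1 → √(1 + 1 / C) ≤ max ‖x + h‖ ‖x - h‖ := by
  have hcont : Continuous fun y => B y y :=
    B.toContinuousBilinearMap.continuous₂.comp (continuous_id.prodMk continuous_id)
  obtain ⟨x, hx, hmax⟩ := (isCompact_sphere (0 : X) 1).exists_isMaxOn
    (NormedSpace.sphere_nonempty.mpr zero_le_one) hcont.continuousOn
  have hx1 : ‖x‖ = 1 := by simpa using hx
  refine ⟨x, hx1, fun h hh => ?_⟩
  have hxle : B x x ≤ 1 := by simpa [hx1] using (hB x).1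
  have hxge : 1 ≤ C * B x x := by simpa [hx1] using (hB x).2
  have hxpos : 0 < B x x := pos_of_mul_pos_right (zero_lt_one.trans_le hxge) hC.le
  have hh : 1 / C ≤ B h h := by
    rw [div_le_iff₀ hC]; simpa [hh, mul_comm] using (hB h).2
  have hlarge (z : X) (hz : B x x + 1 / C ≤ B z z) : √(1 + 1 / C) ≤ ‖z‖ := by
    have hz' := hz.trans (B.apply_le_mul_norm_sq_of_isMaxOn_sphere hmax z)
    refine Real.sqrt_le_iff.mpr ⟨norm_nonneg z, le_of_mul_le_mul_left ?_ hxpos⟩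
    have : B x x / C ≤ 1 / C := by gcongr
    linarith [show B x x * (1 + 1 / C) = B x x + B x x / C by ring]
  have hpar := B.apply_add_add_apply_sub x h
  rcases le_total (B (x + h) (x + h)) (B (x - h) (x - h)) with hle | hle
  · exact (hlarge _ (by linarith)).trans (le_max_right _ _)
  · exact (hlarge _ (by linarith)).trans (le_max_left _ _)

end LinearMap.BilinForm

/-- For every positive integer `n` there is `δ > 0` (one may take
`δ = √(1 + 1/n) - 1`) such that every `n`-dimensional real Banach space `X`
has a unit vector `x` with `max ‖x + h‖ ‖x - h‖ ≥ 1 + δ` for all unit `h`. -/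
theorem finite_dim_uniformly_non_LASQ (n : ℕ) (hn : 1 ≤ n) :
    0 < Real.sqrt (1 + 1 / n) - 1 ∧
    ∀ (X : Type) (_ : NormedAddCommGroup X) (_ : NormedSpace ℝ X),
      FiniteDimensional ℝ X → Module.finrank ℝ X = n →
      ∃ x : X, ‖x‖ = 1 ∧ ∀ h : X, ‖h‖ = 1 →
        1 + (Real.sqrt (1 + 1 / n) - 1) ≤ max ‖x + h‖ ‖x - h‖ := by
  have hn' : (0 : ℝ) < n := by exact_mod_cast hn
  refine ⟨?_, fun X _ _ _ hX => ?_⟩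
  · rw [sub_pos, Real.lt_sqrt zero_le_one]
    simpa using hn'
  · have : Nontrivial X := Module.nontrivial_of_finrank_pos (R := ℝ) (by omega)
    obtain ⟨B, hB⟩ := exists_bilinForm_le_norm_sq_le_finrank_mul X
    rw [hX] at hB
    simpa using B.exists_norm_eq_one_forall_sqrt_le_max_norm_add_sub hn' hB
end

section
/- Let x be a point with ‖x‖_J = ‖x‖ = 1, where ‖·‖_J is a Euclidean (inner product) norm on ℝ^n satisfying ‖y‖_J ≤ ‖y‖ ≤ n^{1/2}‖y‖_J for all y. Then for every h with ‖h‖ = 1, max{‖x + h‖, ‖x − h‖} ≥ (1 + 1/n)^{1/2}. -/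
/-! By the parallelogram law the larger of `‖x ± h‖²` is at least `‖x‖² + ‖h‖²`, and
`‖h‖² ≥ 1/n` because `1 = Nrm h ≤ √n ‖h‖`; the bound then transfers from `‖·‖` to the
larger norm `Nrm`. -/

theorem sqrt_sq_norm_add_sq_norm_le_max_norm_add_norm_sub {E : Type*}
    [NormedAddCommGroup E] [InnerProductSpace ℝ E] (x h : E) :
    Real.sqrt (‖x‖ ^ 2 + ‖h‖ ^ 2) ≤ max ‖x + h‖ ‖x - h‖ := by
  have parallelogram := parallelogram_law_with_norm ℝ x h
  have hplus : ‖x + h‖ ≤ max ‖x + h‖ ‖x - h‖ := le_max_left _ _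
  have hminus : ‖x - h‖ ≤ max ‖x + h‖ ‖x - h‖ := le_max_right _ _
  refine Real.sqrt_le_iff.mpr ⟨(norm_nonneg _).trans hplus, ?_⟩
  nlinarith [norm_nonneg (x + h), norm_nonneg (x - h)]

theorem one_div_le_sq_of_one_le_sqrt_mul {c a : ℝ} (hc : 0 ≤ c) (h : 1 ≤ Real.sqrt c * a) :
    1 / c ≤ a ^ 2 := by
  have hsq : 1 ≤ c * a ^ 2 := by
    have := pow_le_pow_left₀ zero_le_one h 2
    rwa [one_pow, mul_pow, Real.sq_sqrt hc] at this
  have hc_pos : 0 < c := lt_of_le_of_ne hc fun h0 => by rw [← h0, zero_mul] at hsq; linarith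
  rwa [div_le_iff₀ hc_pos, mul_comm]

theorem john_point_estimate_general (n : ℕ)
    (Nrm : EuclideanSpace ℝ (Fin n) → ℝ)
    (h₁ : ∀ y, ‖y‖ ≤ Nrm y)
    (h₂ : ∀ y, Nrm y ≤ Real.sqrt n * ‖y‖)
    (x : EuclideanSpace ℝ (Fin n)) (hxJ : ‖x‖ = 1) :
    ∀ h : EuclideanSpace ℝ (Fin n), Nrm h = 1 →
      Real.sqrt (1 + 1 / n) ≤ max (Nrm (x + h)) (Nrm (x - h)) := by
  intro h hh
  have hh_sq : 1 / (n : ℝ) ≤ ‖h‖ ^ 2 :=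
    one_div_le_sq_of_one_le_sqrt_mul n.cast_nonneg (hh ▸ h₂ h)
  calc Real.sqrt (1 + 1 / n)
      ≤ Real.sqrt (‖x‖ ^ 2 + ‖h‖ ^ 2) := Real.sqrt_le_sqrt (by rw [hxJ, one_pow]; linarith)
    _ ≤ max ‖x + h‖ ‖x - h‖ := sqrt_sq_norm_add_sq_norm_le_max_norm_add_norm_sub x h
    _ ≤ max (Nrm (x + h)) (Nrm (x - h)) := max_le_max (h₁ _) (h₁ _)

/-- If `Nrm` is a norm on `ℝⁿ` (with Euclidean norm `‖·‖_J = ‖·‖`) satisfying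
`‖y‖ ≤ Nrm y ≤ √n ‖y‖` for all `y`, and `x` satisfies `‖x‖ = Nrm x = 1`,
then for every `h` with `Nrm h = 1` we have
`max (Nrm (x+h)) (Nrm (x-h)) ≥ √(1 + 1/n)`. -/
theorem john_point_estimate (n : ℕ) (hn : 1 ≤ n)
    (Nrm : EuclideanSpace ℝ (Fin n) → ℝ)
    (h₁ : ∀ y, ‖y‖ ≤ Nrm y)
    (h₂ : ∀ y, Nrm y ≤ Real.sqrt n * ‖y‖)
    (x : EuclideanSpace ℝ (Fin n)) (hxJ : ‖x‖ = 1) (hx : Nrm x = 1) :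
    ∀ h : EuclideanSpace ℝ (Fin n), Nrm h = 1 →
      Real.sqrt (1 + 1 / n) ≤ max (Nrm (x + h)) (Nrm (x - h)) :=
  john_point_estimate_general n Nrm h₁ h₂ x hxJ
end

section
/- Let k, n, m be positive integers with k² ≤ n and m = 2n, and let ‖·‖_{k,n} be the norm on ℝ^m defined by ‖f‖_{k,n} = sup over x in C_{k,n} of |f(x)|. Then for every f with ‖f‖_{k,n} = 1 there exists h with ‖h‖_{k,n} = 1 such that ‖f + h‖_{k,n} ≤ 1 + 1/k and ‖f − h‖_{k,n} ≤ 1 + 1/k. -/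
/-!
Since `‖f‖ = 1`, every coordinate of `f` is at most `k` and every sum of `n` coordinates at most
`n` in absolute value. Hence fewer than `n` coordinates exceed `1` (`n` of them would sum to more
than `n`), and likewise fewer than `n` fall below `-1`; as there are `2n` coordinates, some `l` has
`|f l| ≤ 1`. Take `h = k e_l`. Perturbing `f` by `± k` at `l` costs at most `(1 + k)/k` on the
functionals of `B_k` and at most `(n + k)/n ≤ 1 + 1/k` on those of `A_n`, the last inequality
being `k² ≤ n`.
-/

open Finset

/-- The value set `{|f(x)| : x ∈ C_{k,n}} = {|f(x)| : x ∈ B_k ∪ A_n}` for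
`f ∈ ℝᵐ`, where `A_n` consists of the averaging functionals
`(1/n)∑_{j∈A} e_j*` over `n`-element sets `A`, and `B_k = {(1/k) e_j*}`. -/
def valueSet (k n m : ℕ) (f : Fin m → ℝ) : Set ℝ :=
  {r | ∃ A : Finset (Fin m), A.card = n ∧ r = |∑ j ∈ A, f j| / n} ∪
  {r | ∃ j : Fin m, r = |f j| / k}

/-- The norm `‖f‖_{k,n} = sup_{x ∈ C_{k,n}} |f(x)|` on `ℝᵐ`. -/
noncomputable def nknNorm (k n m : ℕ) (f : Fin m → ℝ) : ℝ :=
  sSup (valueSet k n m f)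

section Pigeonhole

variable {ι : Type*} [Fintype ι] {n : ℕ} {f : ι → ℝ}

lemma exists_card_eq_and_lt_sum (hn : 0 < n) (hcard : n ≤ #{j | 1 < f j}) :
    ∃ A : Finset ι, #A = n ∧ (n : ℝ) < ∑ j ∈ A, f j := by
  obtain ⟨A, hA, rfl⟩ := exists_subset_card_eq hcard
  refine ⟨A, rfl, ?_⟩
  calc (#A : ℝ) = ∑ _j ∈ A, (1 : ℝ) := by simp
    _ < ∑ j ∈ A, f j :=
      sum_lt_sum_of_nonempty (card_pos.mp hn) fun j hj => (mem_filter.mp (hA hj)).2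

lemma exists_abs_le_one_of_forall_abs_sum_le (hn : 0 < n) (hι : 2 * n ≤ Fintype.card ι + 1)
    (hf : ∀ A : Finset ι, #A = n → |∑ j ∈ A, f j| ≤ n) : ∃ l, |f l| ≤ 1 := by
  classical
  by_contra! hbig
  have hcover : Fintype.card ι ≤ #{j | 1 < f j} + #{j | 1 < (-f) j} := by
    calc Fintype.card ι = #(univ : Finset ι) := card_univ.symm
      _ ≤ #({j | 1 < f j ∨ 1 < (-f) j} : Finset ι) :=
          card_le_card fun j _ => by simpa using lt_abs.mp (hbig j)
      _ ≤ _ := by rw [filter_or]; exact card_union_le _ _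
  obtain ⟨A, hA, hlt⟩ | ⟨A, hA, hlt⟩ :
      (∃ A : Finset ι, #A = n ∧ (n : ℝ) < ∑ j ∈ A, f j) ∨
        ∃ A : Finset ι, #A = n ∧ (n : ℝ) < ∑ j ∈ A, (-f) j := by
    by_cases h : n ≤ #{j | 1 < f j}
    · exact .inl (exists_card_eq_and_lt_sum hn h)
    · exact .inr (exists_card_eq_and_lt_sum hn (by omega))
  · linarith [hf A hA, le_abs_self (∑ j ∈ A, f j)]
  · simp only [Pi.neg_apply, sum_neg_distrib] at hlt
    linarith [hf A hA, neg_abs_le (∑ j ∈ A, f j)]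

end Pigeonhole

section Norm

variable {k n m : ℕ}

lemma valueSet_bddAbove (f : Fin m → ℝ) : BddAbove (valueSet k n m f) :=
  .union ((Set.finite_range fun A : Finset (Fin m) => |∑ j ∈ A, f j| / n).subset
      (by rintro r ⟨A, _, rfl⟩; exact ⟨A, rfl⟩)).bddAbove
    ((Set.finite_range fun j : Fin m => |f j| / k).subset
      (by rintro r ⟨j, rfl⟩; exact ⟨j, rfl⟩)).bddAbove

lemma nknNorm_le_iff (hk : 0 < k) (hn : 0 < n) (hm : 0 < m) (f : Fin m → ℝ) (c : ℝ) :
    nknNorm k n m f ≤ c ↔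
      (∀ A : Finset (Fin m), #A = n → |∑ j ∈ A, f j| ≤ c * n) ∧ ∀ j, |f j| ≤ c * k := by
  have hne : (valueSet k n m f).Nonempty := ⟨_, .inr ⟨⟨0, hm⟩, rfl⟩⟩
  have hkR : (0 : ℝ) < k := Nat.cast_pos.mpr hk
  have hnR : (0 : ℝ) < n := Nat.cast_pos.mpr hn
  rw [nknNorm, csSup_le_iff (valueSet_bddAbove f) hne]
  constructor
  · intro h
    exact ⟨fun A hA => (div_le_iff₀ hnR).mp (h _ (.inl ⟨A, hA, rfl⟩)),
      fun j => (div_le_iff₀ hkR).mp (h _ (.inr ⟨j, rfl⟩))⟩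
  · rintro ⟨hA, hB⟩ r (⟨A, hAc, rfl⟩ | ⟨j, rfl⟩)
    · exact (div_le_iff₀ hnR).mpr (hA A hAc)
    · exact (div_le_iff₀ hkR).mpr (hB j)

lemma nknNorm_single (hk : 0 < k) (hkn : k ≤ n) (l : Fin m) :
    nknNorm k n m (Pi.single l (k : ℝ)) = 1 := by
  have hkR : (0 : ℝ) < k := Nat.cast_pos.mpr hk
  refine le_antisymm ((nknNorm_le_iff hk (hk.trans_le hkn) l.pos _ _).mpr ⟨fun A _ => ?_, fun j => ?_⟩)
    (le_csSup (valueSet_bddAbove _) (.inr ⟨l, by simp [abs_of_pos hkR, hkR.ne']⟩))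
  · rw [sum_pi_single', one_mul]
    split_ifs <;> simp [abs_of_pos hkR, hkn]
  · rw [one_mul]
    rcases eq_or_ne j l with rfl | hjl
    · simp [abs_of_pos hkR]
    · simp [hjl, hkR.le]

lemma nknNorm_add_single_le (hk : 0 < k) (hkn : k ^ 2 ≤ n) {f : Fin m → ℝ}
    (hf : nknNorm k n m f ≤ 1) {l : Fin m} (hl : |f l| ≤ 1) {a : ℝ} (ha : |a| ≤ k) :
    nknNorm k n m (f + Pi.single l a) ≤ 1 + 1 / k := by
  have hn : 0 < n := (pow_pos hk 2).trans_le hkn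
  have hkR : (0 : ℝ) < k := Nat.cast_pos.mpr hk
  have hk2 : (k : ℝ) ^ 2 ≤ n := by exact_mod_cast hkn
  obtain ⟨hfA, hfB⟩ := (nknNorm_le_iff hk hn l.pos f 1).mp hf
  refine (nknNorm_le_iff hk hn l.pos _ _).mpr ⟨fun A hA => ?_, fun j => ?_⟩
  · have hsingle : |∑ j ∈ A, Pi.single l a j| ≤ k := by
      rw [sum_pi_single']
      split_ifs <;> simp [ha, hkR.le]
    have hkn' : (k : ℝ) ≤ n / k := by rw [le_div_iff₀ hkR]; nlinarith
    calc |∑ j ∈ A, (f + Pi.single l a : Fin m → ℝ) j|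
        ≤ |∑ j ∈ A, f j| + |∑ j ∈ A, Pi.single l a j| := by
          simp only [Pi.add_apply, sum_add_distrib]; exact abs_add_le _ _
      _ ≤ n + n / k := by linarith [hfA A hA]
      _ = (1 + 1 / k) * n := by ring
  · have hexpand : (1 + 1 / (k : ℝ)) * k = k + 1 := by field_simp
    rw [hexpand, Pi.add_apply]
    rcases eq_or_ne j l with rfl | hjl
    · simp only [Pi.single_eq_same]
      linarith [abs_add_le (f j) a]
    · simp only [Pi.single_eq_of_ne hjl, add_zero]
      linarith [hfB j]

end Norm

/-- If `k² ≤ n` and `m = 2n`, then for every `f` of norm one in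
`(ℝᵐ, ‖·‖_{k,n})` there is `h` of norm one with `‖f ± h‖_{k,n} ≤ 1 + 1/k`. -/
theorem finite_dim_almost_square_points (k n m : ℕ) (hk : 0 < k)
    (hkn : k ^ 2 ≤ n) (hm : m = 2 * n)
    (f : Fin m → ℝ) (hf : nknNorm k n m f = 1) :
    ∃ h : Fin m → ℝ, nknNorm k n m h = 1 ∧
      nknNorm k n m (f + h) ≤ 1 + 1 / k ∧
      nknNorm k n m (f - h) ≤ 1 + 1 / k := by
  have hn : 0 < n := (pow_pos hk 2).trans_le hkn
  have hsums := ((nknNorm_le_iff hk hn (by omega) f 1).mp hf.le).1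
  obtain ⟨l, hl⟩ := exists_abs_le_one_of_forall_abs_sum_le hn (by simp [hm])
    fun A hA => (hsums A hA).trans_eq (one_mul _)
  have habs : |(k : ℝ)| ≤ k := (abs_of_nonneg k.cast_nonneg).le
  refine ⟨Pi.single l k, nknNorm_single hk (Nat.le_self_pow two_ne_zero k |>.trans hkn) l,
    nknNorm_add_single_le hk hkn hf.le hl habs, ?_⟩
  rw [sub_eq_add_neg, ← Pi.single_neg]
  exact nknNorm_add_single_le hk hkn hf.le hl (by rwa [abs_neg])
end

section
/- Fix an integer k ≥ 2 and a positive integer N. The norm ‖f‖_N = sup_{x ∈ D_N} |f(x)| on ℓ_∞ satisfies k^{-1}‖f‖_∞ ≤ ‖f‖_N ≤ k‖f‖_∞ for every f ∈ ℓ_∞. -/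
open Finset Filter

/-- The block `E_n = {2^n, …, 2^{n+1} - 1}`. -/
def blockE (n : ℕ) : Finset ℕ := Finset.Ico (2 ^ n) (2 ^ (n + 1))

/-- The value set `{|f(x)| : x ∈ D_N}` where `D_N = C ∪ B ∪ A_N`:
`A_N` are the averaging functionals `(1/N)∑_{j∈A} e_j*` over sets of size `kN`,
`B = {(1/k) e_j*}`, and `C = ⋃_{n≥1} C_n` with
`C_n = {(1/2)e_l* ± (1/2)e_m* : l ≠ m ∈ E_n}`. -/
def valueSetN (k N : ℕ) (f : ℕ → ℝ) : Set ℝ :=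
  {r | ∃ A : Finset ℕ, A.card = k * N ∧ r = |∑ j ∈ A, f j| / N} ∪
  {r | ∃ j : ℕ, r = |f j| / k} ∪
  {r | ∃ n l m : ℕ, 1 ≤ n ∧ l ∈ blockE n ∧ m ∈ blockE n ∧ l ≠ m ∧
        (r = |f l / 2 + f m / 2| ∨ r = |f l / 2 - f m / 2|)}

/-- The norm `‖f‖_N = sup_{x ∈ D_N} |f(x)|` on `ℓ_∞`. -/
noncomputable def normN (k N : ℕ) (f : ℕ → ℝ) : ℝ :=
  sSup (valueSetN k N f)

/-! Every functional in `D_N` has `ℓ₁`-norm at most `k` (those in `A_N` have norm exactly `k`, those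
in `B` and `C` at most `1`), which gives `‖f‖_N ≤ k ‖f‖_∞`; conversely `‖f‖_N ≥ |f_j| / k` is
witnessed by `k⁻¹ e_j* ∈ B`. -/

lemma abs_half_add_half_le {a b S : ℝ} (ha : |a| ≤ S) (hb : |b| ≤ S) : |a / 2 + b / 2| ≤ S := by
  rw [abs_le] at *
  constructor <;> linarith

lemma abs_half_sub_half_le {a b S : ℝ} (ha : |a| ≤ S) (hb : |b| ≤ S) : |a / 2 - b / 2| ≤ S := by
  rw [sub_eq_add_neg, ← neg_div]
  exact abs_half_add_half_le ha (by rwa [abs_neg])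

section valueSetN

variable {k N : ℕ} {f : ℕ → ℝ} {S : ℝ}

lemma abs_sum_div_le_of_card_eq {A : Finset ℕ} (hA : A.card = k * N) (hS : ∀ j, |f j| ≤ S) :
    |∑ j ∈ A, f j| / N ≤ k * S := by
  have hS0 : 0 ≤ S := (abs_nonneg _).trans (hS 0)
  refine div_le_of_le_mul₀ N.cast_nonneg (by positivity) ?_
  calc |∑ j ∈ A, f j| ≤ ∑ j ∈ A, |f j| := abs_sum_le_sum_abs _ _
    _ ≤ ∑ _ ∈ A, S := sum_le_sum fun j _ => hS j
    _ = k * S * N := by rw [sum_const, nsmul_eq_mul, hA]; push_cast; ring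

lemma le_mul_of_mem_valueSetN (hk : 1 ≤ k) (hS : ∀ j, |f j| ≤ S) :
    ∀ r ∈ valueSetN k N f, r ≤ k * S := by
  have hk' : (1 : ℝ) ≤ k := by exact_mod_cast hk
  have hS0 : 0 ≤ S := (abs_nonneg _).trans (hS 0)
  rintro r ((⟨A, hA, rfl⟩ | ⟨j, rfl⟩) | ⟨n, l, m, -, -, -, -, rfl | rfl⟩)
  · exact abs_sum_div_le_of_card_eq hA hS
  · calc |f j| / k ≤ |f j| := div_le_self (abs_nonneg _) hk'
      _ ≤ k * S := (hS j).trans (le_mul_of_one_le_left hS0 hk')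
  · exact (abs_half_add_half_le (hS l) (hS m)).trans (le_mul_of_one_le_left hS0 hk')
  · exact (abs_half_sub_half_le (hS l) (hS m)).trans (le_mul_of_one_le_left hS0 hk')

lemma abs_div_mem_valueSetN (j : ℕ) : |f j| / k ∈ valueSetN k N f :=
  Or.inl (Or.inr ⟨j, rfl⟩)

lemma normN_le (hk : 1 ≤ k) (hS : ∀ j, |f j| ≤ S) : normN k N f ≤ k * S :=
  csSup_le ⟨_, abs_div_mem_valueSetN 0⟩ (le_mul_of_mem_valueSetN hk hS)

lemma abs_le_mul_normN (hk : 1 ≤ k) (hS : ∀ j, |f j| ≤ S) (j : ℕ) :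
    |f j| ≤ k * normN k N f := by
  have hbdd : BddAbove (valueSetN k N f) := ⟨_, le_mul_of_mem_valueSetN hk hS⟩
  have hk0 : (0 : ℝ) < k := by exact_mod_cast hk
  rw [← div_le_iff₀' hk0]
  exact le_csSup hbdd (abs_div_mem_valueSetN j)

end valueSetN

theorem normN_equivalent_general (k N : ℕ) (hk : 2 ≤ k)
    (f : ℕ → ℝ) (hf : ∃ M : ℝ, ∀ j, |f j| ≤ M) :
    (k : ℝ)⁻¹ * (⨆ j, |f j|) ≤ normN k N f ∧
    normN k N f ≤ (k : ℝ) * ⨆ j, |f j| := by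
  obtain ⟨M, hM⟩ := hf
  have hS : ∀ j, |f j| ≤ ⨆ i, |f i| := le_ciSup ⟨M, Set.forall_mem_range.2 hM⟩
  have hk1 : 1 ≤ k := by omega
  refine ⟨?_, normN_le hk1 hS⟩
  rw [inv_mul_le_iff₀ (by exact_mod_cast hk1)]
  exact ciSup_le (abs_le_mul_normN hk1 hS)

/-- For `k ≥ 2` and `N ≥ 1`, the norm `‖·‖_N` on `ℓ_∞` satisfies
`k⁻¹ ‖f‖_∞ ≤ ‖f‖_N ≤ k ‖f‖_∞` for every bounded `f`. -/
theorem normN_equivalent (k N : ℕ) (hk : 2 ≤ k) (hN : 1 ≤ N)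
    (f : ℕ → ℝ) (hf : ∃ M : ℝ, ∀ j, |f j| ≤ M) :
    (k : ℝ)⁻¹ * (⨆ j, |f j|) ≤ normN k N f ∧
    normN k N f ≤ (k : ℝ) * ⨆ j, |f j| :=
  normN_equivalent_general k N hk f hf
end

section
/- Let Z and W be Banach spaces, with Z almost square. Then the ℓ_∞-direct sum W ⊕_∞ Z is almost square. -/
/-!
Normalise the second coordinates `zᵢ` of the given unit vectors of `W × Z` to unit vectors `yᵢ`
of `Z` and take an almost-square witness `h` for the `yᵢ`. Since `zᵢ ± h` is a convex combination
of `yᵢ ± h` and `±h`, it still has norm at most `1 + ε`, so `(0, h)` is a witness in `W × Z`.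
-/

/-- A normed space is almost square (ASQ) if for every `ε > 0` and finitely
many unit vectors `x₁, …, xₙ` there is a unit vector `h` with
`‖xᵢ ± h‖ ≤ 1 + ε` for all `i`. -/
def IsASQ (X : Type*) [NormedAddCommGroup X] : Prop :=
  ∀ ε : ℝ, 0 < ε → ∀ (n : ℕ) (x : Fin n → X), (∀ i, ‖x i‖ = 1) →
    ∃ h : X, ‖h‖ = 1 ∧ ∀ i, ‖x i + h‖ ≤ 1 + ε ∧ ‖x i - h‖ ≤ 1 + ε

theorem norm_smul_add_le_of_norm_add_le {E : Type*} [SeminormedAddCommGroup E] [NormedSpace ℝ E]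
    {y h : E} {t c : ℝ} (ht₀ : 0 ≤ t) (ht₁ : t ≤ 1) (hh : ‖h‖ ≤ c) (hyh : ‖y + h‖ ≤ c) :
    ‖t • y + h‖ ≤ c := by
  have hcombo : t • (y + h) + (1 - t) • h = t • y + h := by
    rw [smul_add, sub_smul, one_smul]
    abel
  have hmem := convex_closedBall (0 : E) c (mem_closedBall_zero_iff.2 hyh)
    (mem_closedBall_zero_iff.2 hh) ht₀ (sub_nonneg.2 ht₁) (add_sub_cancel t 1)
  rwa [hcombo, mem_closedBall_zero_iff] at hmem

theorem exists_norm_eq_one_and_norm_smul_eq {E : Type*} [NormedAddCommGroup E] [NormedSpace ℝ E]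
    [Nontrivial E] (z : E) : ∃ y : E, ‖y‖ = 1 ∧ ‖z‖ • y = z := by
  rcases eq_or_ne z 0 with rfl | hz
  · obtain ⟨y, hy⟩ := exists_norm_eq E zero_le_one
    exact ⟨y, hy, by simp⟩
  · exact ⟨‖z‖⁻¹ • z, norm_smul_inv_norm hz, smul_inv_smul₀ (norm_ne_zero_iff.2 hz) z⟩

namespace IsASQ

variable {X : Type*} [NormedAddCommGroup X]

theorem nontrivial (hX : IsASQ X) : Nontrivial X := by
  obtain ⟨h, hh, -⟩ := hX 1 one_pos 0 Fin.elim0 (fun i ↦ i.elim0)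
  exact ⟨⟨h, 0, norm_ne_zero_iff.1 (hh ▸ one_ne_zero)⟩⟩

theorem exists_of_norm_le_one [NormedSpace ℝ X] (hX : IsASQ X) {ε : ℝ} (hε : 0 < ε) {n : ℕ}
    (z : Fin n → X) (hz : ∀ i, ‖z i‖ ≤ 1) :
    ∃ h : X, ‖h‖ = 1 ∧ ∀ i, ‖z i + h‖ ≤ 1 + ε ∧ ‖z i - h‖ ≤ 1 + ε := by
  have := hX.nontrivial
  choose y hy_norm hy_smul using fun i ↦ exists_norm_eq_one_and_norm_smul_eq (z i)
  obtain ⟨h, hh, hyh⟩ := hX ε hε n y hy_norm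
  have hh_le : ‖h‖ ≤ 1 + ε := by linarith
  refine ⟨h, hh, fun i ↦ ⟨?_, ?_⟩⟩
  · rw [← hy_smul i]
    exact norm_smul_add_le_of_norm_add_le (norm_nonneg _) (hz i) hh_le (hyh i).1
  · rw [← hy_smul i, sub_eq_add_neg]
    exact norm_smul_add_le_of_norm_add_le (norm_nonneg _) (hz i) (by rwa [norm_neg])
      (by rw [← sub_eq_add_neg]; exact (hyh i).2)

end IsASQ

theorem prod_sup_ASQ_general (W Z : Type*)
    [NormedAddCommGroup W]
    [NormedAddCommGroup Z] [NormedSpace ℝ Z]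
    (hZ : IsASQ Z) : IsASQ (W × Z) := by
  intro ε hε n x hx
  have hx_le : ∀ i, ‖(x i).1‖ ≤ 1 ∧ ‖(x i).2‖ ≤ 1 := fun i ↦ norm_prod_le_iff.1 (hx i).le
  obtain ⟨h, hh, hzh⟩ := hZ.exists_of_norm_le_one hε (fun i ↦ (x i).2) fun i ↦ (hx_le i).2
  have hw : ∀ i, ‖(x i).1‖ ≤ 1 + ε := fun i ↦ by linarith [(hx_le i).1]
  refine ⟨(0, h), by simp [Prod.norm_def, hh], fun i ↦ ⟨?_, ?_⟩⟩
  · exact norm_prod_le_iff.2 ⟨by simpa using hw i, by simpa using (hzh i).1⟩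
  · exact norm_prod_le_iff.2 ⟨by simpa using hw i, by simpa using (hzh i).2⟩

/-- If `Z` is almost square then so is the `ℓ_∞`-direct sum `W ⊕_∞ Z`
(the product `W × Z` with the max norm). -/
theorem prod_sup_ASQ (W Z : Type*)
    [NormedAddCommGroup W] [NormedSpace ℝ W] [CompleteSpace W]
    [NormedAddCommGroup Z] [NormedSpace ℝ Z] [CompleteSpace Z]
    (hZ : IsASQ Z) : IsASQ (W × Z) :=
  prod_sup_ASQ_general W Z hZ
end

section
/- A c_0-sum of any family of nonzero Banach spaces is almost square. -/
open Filter

/-- The `c_0`-sum of a family `(X i)`: the elements `f` of the `ℓ_∞`-sum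
`lp X ∞` with `‖f i‖ → 0` along the cofinite filter, with the sup norm. -/
noncomputable def c0Sum {I : Type*} (X : I → Type*) [∀ i, NormedAddCommGroup (X i)] :
    AddSubgroup (lp X (⊤ : ENNReal)) where
  carrier := {f | Tendsto (fun i => ‖(f : ∀ i, X i) i‖) cofinite (nhds 0)}
  add_mem' {f g} hf hg := by
    refine squeeze_zero (fun i => norm_nonneg _) (fun i => ?_) (by simpa using hf.add hg)
    simpa using norm_add_le ((f : ∀ i, X i) i) ((g : ∀ i, X i) i)
  zero_mem' := by simpa using (tendsto_const_nhds : Tendsto (fun _ : I => (0:ℝ)) cofinite (nhds 0))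
  neg_mem' {f} hf := by simpa using hf

/-! Given finitely many unit vectors `x j` of the `c_0`-sum, their coordinates tend to zero,
so there is a coordinate `i` where all of them have norm at most `ε`. Putting a unit vector
of `X i` in that coordinate gives `h` with `‖x j ± h‖ ≤ max ‖x j‖ (‖x j i‖ + 1) ≤ 1 + ε`. -/

theorem lp.norm_add_single_le_max {I : Type*} {X : I → Type*} [∀ i, NormedAddCommGroup (X i)]
    [DecidableEq I] (f : lp X ⊤) (i : I) (v : X i) :
    ‖f + lp.single ⊤ i v‖ ≤ max ‖f‖ (‖f i‖ + ‖v‖) := by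
  refine lp.norm_le_of_forall_le ((norm_nonneg f).trans (le_max_left _ _)) fun j => ?_
  rw [lp.coeFn_add, Pi.add_apply]
  obtain rfl | hji := eq_or_ne j i
  · rw [lp.single_apply_self]
    exact (norm_add_le _ _).trans (le_max_right _ _)
  · rw [lp.single_apply_ne _ _ _ hji, add_zero]
    exact (lp.norm_apply_le_norm ENNReal.top_ne_zero f j).trans (le_max_left _ _)

namespace c0Sum

variable {I : Type*} {X : I → Type*} [∀ i, NormedAddCommGroup (X i)]

theorem single_mem [DecidableEq I] (i : I) (v : X i) : lp.single ⊤ i v ∈ c0Sum X := by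
  refine tendsto_const_nhds.congr' ?_
  filter_upwards [(Set.finite_singleton i).eventually_cofinite_notMem] with j hj
  rw [lp.single_apply_ne _ _ _ hj, norm_zero]

theorem eventually_forall_norm_apply_le {ι : Type*} [Finite ι] (x : ι → c0Sum X) {ε : ℝ}
    (hε : 0 < ε) : ∀ᶠ i in cofinite, ∀ j, ‖(x j : lp X ⊤) i‖ ≤ ε :=
  eventually_all.2 fun j => (x j).2.eventually (ge_mem_nhds hε)

end c0Sum

theorem c0Sum_ASQ_general {I : Type*} [Infinite I] (X : I → Type*)
    [∀ i, NormedAddCommGroup (X i)] [∀ i, NormedSpace ℝ (X i)]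
    [∀ i, Nontrivial (X i)] :
    IsASQ (c0Sum X) := by
  classical
  intro ε hε n x hx
  obtain ⟨i, hi⟩ := (c0Sum.eventually_forall_norm_apply_le x hε).exists
  obtain ⟨v, hv⟩ := exists_norm_eq (X i) zero_le_one
  have hbound : ∀ j (w : X i), ‖w‖ = 1 →
      ‖(x j : lp X ⊤) + lp.single ⊤ i w‖ ≤ 1 + ε := fun j w hw =>
    (lp.norm_add_single_le_max _ i w).trans <|
      max_le (by rw [show ‖(x j : lp X ⊤)‖ = 1 from hx j]; linarith) (by linarith [hi j])
  refine ⟨⟨lp.single ⊤ i v, c0Sum.single_mem i v⟩,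
    (lp.norm_single ENNReal.zero_lt_top i v).trans hv, fun j => ⟨hbound j v hv, ?_⟩⟩
  have hminus := hbound j (-v) (by rw [norm_neg, hv])
  rwa [lp.single_neg, ← sub_eq_add_neg] at hminus

/-- A `c_0`-sum of a family of nonzero Banach spaces is almost square. -/
theorem c0Sum_ASQ {I : Type*} [Infinite I] (X : I → Type*)
    [∀ i, NormedAddCommGroup (X i)] [∀ i, NormedSpace ℝ (X i)]
    [∀ i, CompleteSpace (X i)] [∀ i, Nontrivial (X i)] :
    IsASQ (c0Sum X) :=
  c0Sum_ASQ_general X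
end

section
/- Let X be a separable almost square Banach space. Then there exists a sequence (h_n) in the unit sphere of X such that for every x ∈ X, lim_n ‖x + h_n‖ = max{‖x‖, 1} and lim_n ‖x − h_n‖ = max{‖x‖, 1}. -/
/-!
Apply the ASQ property to the first `n + 1` terms of a dense sequence in the unit sphere with
`ε = 1 / (n + 1)`; this gives unit vectors `h n` with `limsup ‖u ± h n‖ ≤ 1` for every `u` of the
dense sequence. Since `x ↦ ‖x ± h n‖` is 1-Lipschitz, the bound passes to the whole sphere, and
writing `x = ‖x‖ • u` it becomes `limsup ‖x ± h n‖ ≤ max ‖x‖ 1`. The matching lower bound comes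
from `2 max ‖x‖ 1 ≤ ‖x + h n‖ + ‖x - h n‖`.
-/

open Filter

open Metric Topology

lemma tendsto_of_eventually_le_add_of_two_mul_le {ι : Type*} {l : Filter ι} {a b : ι → ℝ}
    {M : ℝ} (ha : ∀ δ > 0, ∀ᶠ i in l, a i ≤ M + δ) (hb : ∀ δ > 0, ∀ᶠ i in l, b i ≤ M + δ)
    (hab : ∀ i, 2 * M ≤ a i + b i) : Tendsto a l (𝓝 M) := by
  refine tendsto_order.2 ⟨fun m hm => ?_, fun m hm => ?_⟩
  · filter_upwards [hb ((M - m) / 2) (by linarith)] with i hi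
    linarith [hab i]
  · filter_upwards [ha ((m - M) / 2) (by linarith)] with i hi
    linarith

lemma isClosed_setOf_forall_eventually_norm_add_le {E ι : Type*} [SeminormedAddCommGroup E]
    (l : Filter ι) (g : ι → E) (c : ℝ) :
    IsClosed {x : E | ∀ δ > 0, ∀ᶠ i in l, ‖x + g i‖ ≤ c + δ} := by
  refine isClosed_of_closure_subset fun x hx δ hδ => ?_
  obtain ⟨y, hy, hxy⟩ := mem_closure_iff.1 hx (δ / 2) (half_pos hδ)
  filter_upwards [hy (δ / 2) (half_pos hδ)] with i hi
  calc ‖x + g i‖ = ‖(x - y) + (y + g i)‖ := by congr 1; abel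
    _ ≤ ‖x - y‖ + ‖y + g i‖ := norm_add_le _ _
    _ ≤ c + δ := by rw [← dist_eq_norm]; linarith

section NormedSpace

variable {E : Type*} [SeminormedAddCommGroup E] [NormedSpace ℝ E]

lemma two_mul_max_norm_le_norm_add_add_norm_sub (x y : E) :
    2 * max ‖x‖ ‖y‖ ≤ ‖x + y‖ + ‖x - y‖ := by
  have hx : 2 * ‖x‖ ≤ ‖x + y‖ + ‖x - y‖ := by
    calc 2 * ‖x‖ = ‖(2 : ℝ) • x‖ := by rw [norm_smul, Real.norm_two]
      _ = ‖(x + y) + (x - y)‖ := by congr 1; module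
      _ ≤ ‖x + y‖ + ‖x - y‖ := norm_add_le _ _
  have hy : 2 * ‖y‖ ≤ ‖x + y‖ + ‖x - y‖ := by
    calc 2 * ‖y‖ = ‖(2 : ℝ) • y‖ := by rw [norm_smul, Real.norm_two]
      _ = ‖(x + y) - (x - y)‖ := by congr 1; module
      _ ≤ ‖x + y‖ + ‖x - y‖ := norm_sub_le _ _
  rw [mul_max_of_nonneg _ _ zero_le_two]
  exact max_le hx hy

lemma norm_smul_add_le_max_mul {u h : E} (hu : ‖u‖ ≤ 1) (hh : ‖h‖ ≤ 1) {t c : ℝ}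
    (ht : 0 ≤ t) (hc : 1 ≤ c) (huh : ‖u + h‖ ≤ c) : ‖t • u + h‖ ≤ max t 1 * c := by
  rcases le_total t 1 with ht1 | ht1
  · calc ‖t • u + h‖ = ‖t • (u + h) + (1 - t) • h‖ := by congr 1; module
      _ ≤ t * c + (1 - t) * 1 := by
        refine (norm_add_le _ _).trans (add_le_add ?_ ?_) <;>
          rw [norm_smul, Real.norm_of_nonneg (by linarith)] <;> gcongr
      _ ≤ max t 1 * c := by rw [max_eq_right ht1]; nlinarith
  · calc ‖t • u + h‖ = ‖(t - 1) • u + (u + h)‖ := by congr 1; module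
      _ ≤ (t - 1) * 1 + c := by
        refine (norm_add_le _ _).trans (add_le_add ?_ huh)
        rw [norm_smul, Real.norm_of_nonneg (by linarith)]
        gcongr
      _ ≤ max t 1 * c := by rw [max_eq_left ht1]; nlinarith

lemma eventually_norm_add_le_max_add {ι : Type*} {l : Filter ι} {g : ι → E}
    (hg : ∀ i, ‖g i‖ ≤ 1) (hS : ∀ u : E, ‖u‖ = 1 → ∀ δ > 0, ∀ᶠ i in l, ‖u + g i‖ ≤ 1 + δ)
    (x : E) : ∀ δ > 0, ∀ᶠ i in l, ‖x + g i‖ ≤ max ‖x‖ 1 + δ := by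
  intro δ hδ
  rcases (norm_nonneg x).eq_or_lt' with hx | hx
  · refine Eventually.of_forall fun i => ?_
    calc ‖x + g i‖ ≤ ‖x‖ + ‖g i‖ := norm_add_le _ _
      _ ≤ max ‖x‖ 1 + δ := by linarith [hg i, le_max_right ‖x‖ 1]
  have hM : 0 < max ‖x‖ 1 := lt_max_of_lt_right one_pos
  have hu : ‖‖x‖⁻¹ • x‖ = 1 := by
    rw [norm_smul, norm_inv, norm_norm, inv_mul_cancel₀ hx.ne']
  filter_upwards [hS _ hu (δ / max ‖x‖ 1) (by positivity)] with i hi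
  calc ‖x + g i‖ = ‖‖x‖ • (‖x‖⁻¹ • x) + g i‖ := by rw [smul_inv_smul₀ hx.ne']
    _ ≤ max ‖x‖ 1 * (1 + δ / max ‖x‖ 1) :=
      norm_smul_add_le_max_mul hu.le (hg i) hx.le (by linarith [div_pos hδ hM]) hi
    _ = max ‖x‖ 1 + δ := by field_simp

lemma eventually_norm_add_le_max_add_of_denseRange {ι : Type*} {l : Filter ι} {g : ι → E}
    {u : ℕ → sphere (0 : E) 1} (hu : DenseRange u) (hg : ∀ i, ‖g i‖ ≤ 1)
    (hug : ∀ k, ∀ δ > 0, ∀ᶠ i in l, ‖(u k : E) + g i‖ ≤ 1 + δ) (x : E) :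
    ∀ δ > 0, ∀ᶠ i in l, ‖x + g i‖ ≤ max ‖x‖ 1 + δ := by
  refine eventually_norm_add_le_max_add hg (fun y hy => ?_) x
  have hy' : (⟨y, mem_sphere_zero_iff_norm.2 hy⟩ : sphere (0 : E) 1) ∈ closure (Set.range u) :=
    hu.closure_range ▸ Set.mem_univ _
  rw [closure_subtype] at hy'
  refine closure_minimal ?_ (isClosed_setOf_forall_eventually_norm_add_le l g 1) hy'
  rintro _ ⟨_, ⟨k, rfl⟩, rfl⟩
  exact hug k

end NormedSpace

lemma IsASQ.exists_seq_eventually_norm_add_sub_le {X : Type*} [NormedAddCommGroup X]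
    (hX : IsASQ X) (u : ℕ → X) (hu : ∀ k, ‖u k‖ = 1) :
    ∃ h : ℕ → X, (∀ n, ‖h n‖ = 1) ∧ ∀ k, ∀ δ > 0, ∀ᶠ n in atTop,
      ‖u k + h n‖ ≤ 1 + δ ∧ ‖u k - h n‖ ≤ 1 + δ := by
  choose h hh hbound using fun n : ℕ =>
    hX (1 / (n + 1)) Nat.one_div_pos_of_nat (n + 1) (fun i => u i) (fun i => hu i)
  refine ⟨h, hh, fun k δ hδ => ?_⟩
  filter_upwards [eventually_ge_atTop k,
    (tendsto_order.1 tendsto_one_div_add_atTop_nhds_zero_nat).2 δ hδ] with n hkn hn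
  obtain ⟨hplus, hminus⟩ := hbound n ⟨k, Nat.lt_succ_of_le hkn⟩
  exact ⟨hplus.trans (by linarith), hminus.trans (by linarith)⟩

theorem separable_ASQ_exists_sequence_general (X : Type)
    [NormedAddCommGroup X] [NormedSpace ℝ X]
    [TopologicalSpace.SeparableSpace X] (hX : IsASQ X) :
    ∃ h : ℕ → X, (∀ n, ‖h n‖ = 1) ∧
      ∀ x : X,
        Tendsto (fun n => ‖x + h n‖) atTop (nhds (max ‖x‖ 1)) ∧
        Tendsto (fun n => ‖x - h n‖) atTop (nhds (max ‖x‖ 1)) := by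
  obtain ⟨h₀, hh₀, -⟩ := hX 1 one_pos 0 (fun i => i.elim0) fun i => i.elim0
  have : Nonempty (sphere (0 : X) 1) := ⟨⟨h₀, mem_sphere_zero_iff_norm.2 hh₀⟩⟩
  let u : ℕ → sphere (0 : X) 1 := TopologicalSpace.denseSeq _
  have hu : DenseRange u := TopologicalSpace.denseRange_denseSeq _
  obtain ⟨h, hh, hbound⟩ := hX.exists_seq_eventually_norm_add_sub_le (fun k => (u k : X))
    fun k => norm_eq_of_mem_sphere (u k)
  have hplus := eventually_norm_add_le_max_add_of_denseRange hu (fun n => (hh n).le)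
    fun k δ hδ => (hbound k δ hδ).mono fun _ hn => hn.1
  have hminus := eventually_norm_add_le_max_add_of_denseRange (g := -h) hu
    (fun n => (norm_neg (h n)).trans (hh n) |>.le)
    fun k δ hδ => (hbound k δ hδ).mono fun n hn => by rw [Pi.neg_apply, ← sub_eq_add_neg]; exact hn.2
  simp only [Pi.neg_apply, ← sub_eq_add_neg] at hminus
  have hsum (x : X) (n : ℕ) : 2 * max ‖x‖ 1 ≤ ‖x + h n‖ + ‖x - h n‖ :=
    hh n ▸ two_mul_max_norm_le_norm_add_add_norm_sub x (h n)
  refine ⟨h, hh, fun x => ⟨?_, ?_⟩⟩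
  · exact tendsto_of_eventually_le_add_of_two_mul_le (hplus x) (hminus x) (hsum x)
  · exact tendsto_of_eventually_le_add_of_two_mul_le (hminus x) (hplus x)
      fun n => (hsum x n).trans_eq (add_comm _ _)

/-- In a separable almost square Banach space there is a sequence `(h_n)` of
unit vectors with `‖x ± h_n‖ → max {‖x‖, 1}` for every `x`. -/
theorem separable_ASQ_exists_sequence (X : Type)
    [NormedAddCommGroup X] [NormedSpace ℝ X] [CompleteSpace X]
    [TopologicalSpace.SeparableSpace X] (hX : IsASQ X) :
    ∃ h : ℕ → X, (∀ n, ‖h n‖ = 1) ∧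
      ∀ x : X,
        Tendsto (fun n => ‖x + h n‖) atTop (nhds (max ‖x‖ 1)) ∧
        Tendsto (fun n => ‖x - h n‖) atTop (nhds (max ‖x‖ 1)) :=
  separable_ASQ_exists_sequence_general X hX
end

section
/- There exists an equivalent norm on c_0 such that the renormed space is an M-ideal in its bidual (M-embedded) and its bidual is almost square. -/
open NormedSpace ZeroAtInfty

noncomputable instance instNormedAddCommGroupTripleDual (Z : Type*) [NormedAddCommGroup Z]
    [NormedSpace ℝ Z] : NormedAddCommGroup (StrongDual ℝ (StrongDual ℝ (StrongDual ℝ Z))) :=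
  ContinuousLinearMap.toNormedAddCommGroup (𝕜 := ℝ) (𝕜₂ := ℝ) (E := StrongDual ℝ (StrongDual ℝ Z))
    (F := ℝ) (σ₁₂ := RingHom.id ℝ)

noncomputable instance instNormedSpaceTripleDual (Z : Type*) [NormedAddCommGroup Z]
    [NormedSpace ℝ Z] : NormedSpace ℝ (StrongDual ℝ (StrongDual ℝ (StrongDual ℝ Z))) :=
  ContinuousLinearMap.toNormedSpace (𝕜 := ℝ) (𝕜₂ := ℝ) (E := StrongDual ℝ (StrongDual ℝ Z))
    (F := ℝ) (σ₁₂ := RingHom.id ℝ)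

namespace ASQC

def dd (n : ℕ) : ℕ := 3 * (n + 2)
def Lb (n : ℕ) : ℕ := (n+1)*(n+1) + 1
def tb (n : ℕ) : ℕ := n + 2
abbrev Bt (n : ℕ) : Type := Fin (dd n) → Bool
abbrev Coord (n : ℕ) : Type := Fin (Lb n) × Bt n
def sb (n : ℕ) : ℕ := 2 ^ (dd n)

instance (n : ℕ) : Nonempty (Fin (Lb n)) := ⟨⟨0, Nat.succ_pos _⟩⟩
instance (n : ℕ) : Nonempty (Bt n) := ⟨fun _ => false⟩
instance (n : ℕ) : Nonempty (Coord n) := instNonemptyProd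

lemma sb_pos (n : ℕ) : 0 < (sb n : ℝ) := by
  have : 0 < sb n := Nat.pow_pos (by norm_num)
  exact_mod_cast this

lemma tb_pos (n : ℕ) : 0 < (tb n : ℝ) := by
  have : 0 < tb n := Nat.succ_pos _
  exact_mod_cast this

lemma tb_le_Lb (n : ℕ) : tb n ≤ Lb n := by
  unfold tb Lb; nlinarith

lemma card_Bt (n : ℕ) : Fintype.card (Bt n) = sb n := by
  simp [sb, Fintype.card_fun]

/-! ### the three seminorm pieces -/

noncomputable def asup (n : ℕ) (x : Coord n → ℝ) : ℝ :=
  Finset.univ.sup' Finset.univ_nonempty (fun c => |x c|)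

noncomputable def bsum (n : ℕ) (x : Coord n → ℝ) (l : Fin (Lb n)) : ℝ :=
  (2 / (sb n : ℝ)) * ∑ p : Bt n, |x (l, p)|

noncomputable def bmax (n : ℕ) (x : Coord n → ℝ) (l : Fin (Lb n)) : ℝ :=
  Finset.univ.sup' Finset.univ_nonempty (fun p : Bt n => |x (l, p)|)

lemma Tne (n : ℕ) : (Finset.univ.powersetCard (tb n) : Finset (Finset (Fin (Lb n)))).Nonempty := by
  rw [Finset.powersetCard_nonempty]
  simpa using tb_le_Lb n

noncomputable def dsum (n : ℕ) (x : Coord n → ℝ) : ℝ :=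
  (2 / (tb n : ℝ)) * (Finset.univ.powersetCard (tb n)).sup' (Tne n)
    (fun T => ∑ l ∈ T, bmax n x l)

noncomputable def Gn (n : ℕ) (x : Coord n → ℝ) : ℝ :=
  max (asup n x) (max (Finset.univ.sup' Finset.univ_nonempty (bsum n x)) (dsum n x))

/-! ### basic properties -/

lemma abs_le_asup (n : ℕ) (x : Coord n → ℝ) (c : Coord n) : |x c| ≤ asup n x := by
  rw [asup]; exact Finset.le_sup' (fun c => |x c|) (Finset.mem_univ c)

lemma asup_le (n : ℕ) (x : Coord n → ℝ) {M : ℝ} (h : ∀ c, |x c| ≤ M) : asup n x ≤ M := by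
  rw [asup]; exact Finset.sup'_le _ _ (fun c _ => h c)

lemma asup_nonneg (n : ℕ) (x : Coord n → ℝ) : 0 ≤ asup n x :=
  le_trans (abs_nonneg _) (abs_le_asup n x (Classical.arbitrary _))

lemma abs_le_bmax (n : ℕ) (x : Coord n → ℝ) (l : Fin (Lb n)) (p : Bt n) :
    |x (l, p)| ≤ bmax n x l := by
  rw [bmax]; exact Finset.le_sup' (fun p => |x (l, p)|) (Finset.mem_univ p)

lemma bmax_le (n : ℕ) (x : Coord n → ℝ) (l : Fin (Lb n)) {M : ℝ}
    (h : ∀ p, |x (l, p)| ≤ M) : bmax n x l ≤ M := by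
  rw [bmax]; exact Finset.sup'_le _ _ (fun p _ => h p)

lemma bmax_nonneg (n : ℕ) (x : Coord n → ℝ) (l : Fin (Lb n)) : 0 ≤ bmax n x l :=
  le_trans (abs_nonneg _) (abs_le_bmax n x l (Classical.arbitrary _))

lemma bmax_le_asup (n : ℕ) (x : Coord n → ℝ) (l : Fin (Lb n)) : bmax n x l ≤ asup n x :=
  bmax_le n x l (fun p => abs_le_asup n x (l, p))

lemma asup_le_G (n : ℕ) (x : Coord n → ℝ) : asup n x ≤ Gn n x := le_max_left _ _

lemma abs_le_G (n : ℕ) (x : Coord n → ℝ) (c : Coord n) : |x c| ≤ Gn n x :=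
  le_trans (abs_le_asup n x c) (asup_le_G n x)

lemma bsum_le_G (n : ℕ) (x : Coord n → ℝ) (l : Fin (Lb n)) : bsum n x l ≤ Gn n x :=
  le_trans (Finset.le_sup' _ (Finset.mem_univ l)) (le_trans (le_max_left _ _) (le_max_right _ _))

lemma dsum_le_G (n : ℕ) (x : Coord n → ℝ) : dsum n x ≤ Gn n x :=
  le_trans (le_max_right _ _) (le_max_right _ _)

lemma sumT_le_dsum (n : ℕ) (x : Coord n → ℝ) {T : Finset (Fin (Lb n))}
    (hT : T ∈ Finset.univ.powersetCard (tb n)) :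
    ∑ l ∈ T, bmax n x l ≤ ((tb n : ℝ) / 2) * dsum n x := by
  have h1 : ∑ l ∈ T, bmax n x l ≤ (Finset.univ.powersetCard (tb n)).sup' (Tne n)
      (fun T => ∑ l ∈ T, bmax n x l) := Finset.le_sup' (fun T => ∑ l ∈ T, bmax n x l) hT
  have ht := tb_pos n
  rw [dsum]
  rw [show ((tb n : ℝ) / 2) * ((2 / (tb n : ℝ)) * (Finset.univ.powersetCard (tb n)).sup' (Tne n)
      (fun T => ∑ l ∈ T, bmax n x l)) = (Finset.univ.powersetCard (tb n)).sup' (Tne n)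
      (fun T => ∑ l ∈ T, bmax n x l) from by field_simp]
  exact h1

lemma G_nonneg (n : ℕ) (x : Coord n → ℝ) : 0 ≤ Gn n x :=
  le_trans (asup_nonneg n x) (asup_le_G n x)

lemma bsum_le_two_asup (n : ℕ) (x : Coord n → ℝ) (l : Fin (Lb n)) :
    bsum n x l ≤ 2 * asup n x := by
  have hs := sb_pos n
  have h1 : ∑ p : Bt n, |x (l, p)| ≤ (sb n : ℝ) * asup n x := by
    calc ∑ p : Bt n, |x (l, p)| ≤ ∑ _p : Bt n, asup n x :=
          Finset.sum_le_sum (fun p _ => abs_le_asup n x (l, p))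
    _ = (sb n : ℝ) * asup n x := by
          rw [Finset.sum_const, Finset.card_univ, card_Bt, nsmul_eq_mul]
  rw [bsum]
  calc (2 / (sb n : ℝ)) * ∑ p : Bt n, |x (l, p)|
      ≤ (2 / (sb n : ℝ)) * ((sb n : ℝ) * asup n x) := by
        apply mul_le_mul_of_nonneg_left h1 (by positivity)
  _ = 2 * asup n x := by field_simp

lemma dsum_le_two_asup (n : ℕ) (x : Coord n → ℝ) : dsum n x ≤ 2 * asup n x := by
  have ht := tb_pos n
  rw [dsum]
  have h1 : (Finset.univ.powersetCard (tb n)).sup' (Tne n)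
      (fun T => ∑ l ∈ T, bmax n x l) ≤ (tb n : ℝ) * asup n x := by
    apply Finset.sup'_le
    intro T hT
    rw [Finset.mem_powersetCard] at hT
    calc ∑ l ∈ T, bmax n x l ≤ ∑ _l ∈ T, asup n x :=
          Finset.sum_le_sum (fun l _ => bmax_le_asup n x l)
    _ = (T.card : ℝ) * asup n x := by rw [Finset.sum_const, nsmul_eq_mul]
    _ = (tb n : ℝ) * asup n x := by rw [hT.2]
  calc (2 / (tb n : ℝ)) * _ ≤ (2 / (tb n : ℝ)) * ((tb n : ℝ) * asup n x) :=
        mul_le_mul_of_nonneg_left h1 (by positivity)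
  _ = 2 * asup n x := by field_simp

lemma G_le_two_asup (n : ℕ) (x : Coord n → ℝ) : Gn n x ≤ 2 * asup n x := by
  have h0 := asup_nonneg n x
  apply max_le (by linarith)
  apply max_le _ (dsum_le_two_asup n x)
  exact Finset.sup'_le _ _ (fun l _ => bsum_le_two_asup n x l)

/-! ### subadditivity, homogeneity -/

lemma asup_add (n : ℕ) (x y : Coord n → ℝ) : asup n (x + y) ≤ asup n x + asup n y :=
  asup_le n _ (fun c => le_trans (abs_add_le _ _) (add_le_add (abs_le_asup n x c) (abs_le_asup n y c)))

lemma bsum_add (n : ℕ) (x y : Coord n → ℝ) (l : Fin (Lb n)) :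
    bsum n (x + y) l ≤ bsum n x l + bsum n y l := by
  rw [bsum, bsum, bsum, ← mul_add, ← Finset.sum_add_distrib]
  apply mul_le_mul_of_nonneg_left _ (by positivity)
  exact Finset.sum_le_sum (fun p _ => abs_add_le _ _)

lemma bmax_add (n : ℕ) (x y : Coord n → ℝ) (l : Fin (Lb n)) :
    bmax n (x + y) l ≤ bmax n x l + bmax n y l :=
  bmax_le n _ l (fun p => le_trans (abs_add_le _ _)
    (add_le_add (abs_le_bmax n x l p) (abs_le_bmax n y l p)))

lemma dsum_add (n : ℕ) (x y : Coord n → ℝ) : dsum n (x + y) ≤ dsum n x + dsum n y := by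
  rw [dsum, dsum, dsum, ← mul_add]
  apply mul_le_mul_of_nonneg_left _ (by positivity)
  apply Finset.sup'_le
  intro T hT
  calc ∑ l ∈ T, bmax n (x + y) l ≤ ∑ l ∈ T, (bmax n x l + bmax n y l) :=
        Finset.sum_le_sum (fun l _ => bmax_add n x y l)
  _ = (∑ l ∈ T, bmax n x l) + ∑ l ∈ T, bmax n y l := Finset.sum_add_distrib
  _ ≤ _ := add_le_add (Finset.le_sup' (fun T => ∑ l ∈ T, bmax n x l) hT)
        (Finset.le_sup' (fun T => ∑ l ∈ T, bmax n y l) hT)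

lemma G_add (n : ℕ) (x y : Coord n → ℝ) : Gn n (x + y) ≤ Gn n x + Gn n y := by
  apply max_le
  · exact le_trans (asup_add n x y) (add_le_add (asup_le_G n x) (asup_le_G n y))
  apply max_le
  · apply Finset.sup'_le
    intro l _
    exact le_trans (bsum_add n x y l) (add_le_add (bsum_le_G n x l) (bsum_le_G n y l))
  · exact le_trans (dsum_add n x y) (add_le_add (dsum_le_G n x) (dsum_le_G n y))

lemma mul_sup' {α : Type*} (s : Finset α) (H : s.Nonempty) (f : α → ℝ) {c : ℝ} (hc : 0 ≤ c) :
    s.sup' H (fun a => c * f a) = c * s.sup' H f := by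
  apply le_antisymm
  · exact Finset.sup'_le _ _ (fun a ha =>
      mul_le_mul_of_nonneg_left (Finset.le_sup' _ ha) hc)
  · obtain ⟨a, ha, h⟩ := Finset.exists_mem_eq_sup' H f
    rw [h]
    exact Finset.le_sup' (fun a => c * f a) ha

lemma asup_smul (n : ℕ) (a : ℝ) (x : Coord n → ℝ) : asup n (a • x) = |a| * asup n x := by
  rw [asup, asup, ← mul_sup' _ _ _ (abs_nonneg a)]
  congr 1; funext c
  simp [abs_mul]

lemma bsum_smul (n : ℕ) (a : ℝ) (x : Coord n → ℝ) (l : Fin (Lb n)) :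
    bsum n (a • x) l = |a| * bsum n x l := by
  rw [bsum, bsum]
  simp only [Pi.smul_apply, smul_eq_mul, abs_mul]
  rw [← Finset.mul_sum]
  ring

lemma bmax_smul (n : ℕ) (a : ℝ) (x : Coord n → ℝ) (l : Fin (Lb n)) :
    bmax n (a • x) l = |a| * bmax n x l := by
  rw [bmax, bmax, ← mul_sup' _ _ _ (abs_nonneg a)]
  congr 1; funext p
  simp [abs_mul]

lemma dsum_smul (n : ℕ) (a : ℝ) (x : Coord n → ℝ) : dsum n (a • x) = |a| * dsum n x := by
  rw [dsum, dsum]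
  have h1 : (fun T : Finset (Fin (Lb n)) => ∑ l ∈ T, bmax n (a • x) l)
      = fun T => |a| * ∑ l ∈ T, bmax n x l := by
    funext T
    rw [Finset.mul_sum]
    exact Finset.sum_congr rfl (fun l _ => bmax_smul n a x l)
  rw [h1, mul_sup' _ _ _ (abs_nonneg a)]
  ring

lemma real_mul_max (c u v : ℝ) (hc : 0 ≤ c) : c * max u v = max (c * u) (c * v) := by
  rcases le_total u v with h | h
  · rw [max_eq_right h, max_eq_right (mul_le_mul_of_nonneg_left h hc)]
  · rw [max_eq_left h, max_eq_left (mul_le_mul_of_nonneg_left h hc)]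

lemma G_smul (n : ℕ) (a : ℝ) (x : Coord n → ℝ) : Gn n (a • x) = |a| * Gn n x := by
  rw [Gn, Gn, real_mul_max _ _ _ (abs_nonneg a), real_mul_max _ _ _ (abs_nonneg a)]
  congr 1
  · exact asup_smul n a x
  congr 1
  · rw [← mul_sup' _ _ _ (abs_nonneg a)]
    congr 1; funext l
    exact bsum_smul n a x l
  · exact dsum_smul n a x

lemma G_neg (n : ℕ) (x : Coord n → ℝ) : Gn n (-x) = Gn n x := by
  have : -x = (-1 : ℝ) • x := by funext c; simp
  rw [this, G_smul]
  simp

lemma G_zero (n : ℕ) : Gn n (0 : Coord n → ℝ) = 0 := by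
  have : (0 : Coord n → ℝ) = (0:ℝ) • (0 : Coord n → ℝ) := by simp
  rw [this, G_smul]
  simp

noncomputable def walsh (n : ℕ) (q p : Bt n) : ℝ :=
  ∏ i, (if q i && p i then (-1:ℝ) else 1)

lemma abs_walsh (n : ℕ) (q p : Bt n) : |walsh n q p| = 1 := by
  rw [walsh, Finset.abs_prod]
  apply Finset.prod_eq_one
  intro i _
  by_cases h : q i && p i <;> simp [h]

lemma walsh_symm (n : ℕ) (q p : Bt n) : walsh n q p = walsh n p q := by
  unfold walsh
  exact Finset.prod_congr rfl (fun i _ => by rw [Bool.and_comm])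

lemma sum_pi_bool {d : ℕ} (f : Fin d → Bool → ℝ) :
    ∑ p : Fin d → Bool, ∏ i, f i (p i) = ∏ i, (f i false + f i true) := by
  have : ∀ i : Fin d, f i false + f i true = ∑ b : Bool, f i b := by
    intro i; simp [Fintype.sum_bool]; ring
  simp only [this]
  rw [Finset.prod_univ_sum]
  rw [Fintype.piFinset_univ]

lemma walsh_ortho (n : ℕ) (q q' : Bt n) :
    ∑ p : Bt n, walsh n q p * walsh n q' p = if q = q' then (sb n : ℝ) else 0 := by
  have h1 : ∀ p : Bt n, walsh n q p * walsh n q' p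
      = ∏ i, ((if q i && p i then (-1:ℝ) else 1) * (if q' i && p i then (-1:ℝ) else 1)) := by
    intro p; rw [walsh, walsh, ← Finset.prod_mul_distrib]
  simp only [h1]
  rw [sum_pi_bool (f := fun i b => (if q i && b then (-1:ℝ) else 1) * (if q' i && b then (-1:ℝ) else 1))]
  have h2 : ∀ i : Fin (dd n),
      ((if q i && false then (-1:ℝ) else 1) * (if q' i && false then (-1:ℝ) else 1)
      + (if q i && true then (-1:ℝ) else 1) * (if q' i && true then (-1:ℝ) else 1))
      = if q i = q' i then 2 else 0 := by
    intro i
    cases hq : q i <;> cases hq' : q' i <;> norm_num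
  simp only [h2]
  by_cases h : q = q'
  · subst h
    simp only [if_pos rfl]
    rw [Finset.prod_const]
    simp [sb, Finset.card_univ]
  · rw [if_neg h]
    have : ∃ i, q i ≠ q' i := by
      by_contra hc
      push_neg at hc
      exact h (funext hc)
    obtain ⟨i, hi⟩ := this
    exact Finset.prod_eq_zero (Finset.mem_univ i) (by simp [hi])

lemma walsh_parseval (n : ℕ) (y : Bt n → ℝ) :
    ∑ q : Bt n, (∑ p : Bt n, walsh n q p * y p)^2 = (sb n : ℝ) * ∑ p : Bt n, (y p)^2 := by
  have expand : ∀ q : Bt n, (∑ p : Bt n, walsh n q p * y p)^2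
      = ∑ p : Bt n, ∑ p' : Bt n, (y p * y p') * (walsh n q p * walsh n q p') := by
    intro q
    rw [sq, Finset.sum_mul_sum]
    congr 1; funext p; congr 1; funext p'; ring
  simp only [expand]
  rw [Finset.sum_comm]
  have swap2 : ∀ p : Bt n, ∑ q : Bt n, ∑ p' : Bt n, (y p * y p') * (walsh n q p * walsh n q p')
      = ∑ p' : Bt n, (y p * y p') * (∑ q : Bt n, walsh n q p * walsh n q p') := by
    intro p
    rw [Finset.sum_comm]
    congr 1; funext p'
    rw [Finset.mul_sum]
  simp only [swap2]
  have ortho : ∀ p p' : Bt n, (∑ q : Bt n, walsh n q p * walsh n q p')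
      = if p = p' then (sb n : ℝ) else 0 := by
    intro p p'
    have : ∀ q : Bt n, walsh n q p * walsh n q p' = walsh n p q * walsh n p' q := by
      intro q; rw [walsh_symm n q p, walsh_symm n q p']
    simp only [this]
    exact walsh_ortho n p p'
  simp only [ortho]
  rw [Finset.mul_sum]
  congr 1; funext p
  have : (∑ x : Bt n, y p * y x * if p = x then (sb n : ℝ) else 0)
      = ∑ x : Bt n, (if x = p then y p * y x * (sb n : ℝ) else 0) := by
    congr 1; funext x
    by_cases hx : x = p
    · subst hx; simp
    · rw [if_neg hx, if_neg (fun hh => hx hh.symm), mul_zero]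
  rw [this, Finset.sum_ite_eq' Finset.univ p (fun x => y p * y x * (sb n : ℝ))]
  simp [sq]; ring


/-! ### sign helper -/

noncomputable def sg (a : ℝ) : ℝ := if 0 ≤ a then 1 else -1

lemma abs_sg (a : ℝ) : |sg a| = 1 := by
  rw [sg]; by_cases h : 0 ≤ a <;> simp [h]

lemma sg_mul_self (a : ℝ) : sg a * a = |a| := by
  rw [sg]
  by_cases h : 0 ≤ a
  · rw [if_pos h, one_mul, abs_of_nonneg h]
  · rw [if_neg h, abs_of_neg (lt_of_not_ge h)]; ring

/-! ### the pairing lemma: `Gn` is bounded by testing against admissible functionals -/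

lemma G_le_pairing (n : ℕ) (y : Coord n → ℝ) (M : ℝ)
    (H : ∀ φ : Coord n → ℝ, (∀ x : Coord n → ℝ, |∑ c : Coord n, φ c * x c| ≤ Gn n x) →
      |∑ c : Coord n, φ c * y c| ≤ M) :
    Gn n y ≤ M := by
  have hs := sb_pos n
  have ht := tb_pos n
  apply max_le
  · -- asup piece
    obtain ⟨cs, _, hcs⟩ := Finset.exists_mem_eq_sup' (Finset.univ_nonempty (α := Coord n))
      (fun c => |y c|)
    have : asup n y = |y cs| := hcs
    rw [this]
    have key : ∀ x : Coord n → ℝ, (∑ c : Coord n, (if c = cs then (1:ℝ) else 0) * x c) = x cs := by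
      intro x
      rw [Finset.sum_congr rfl (fun c _ => by
        rw [show (if c = cs then (1:ℝ) else 0) * x c = if c = cs then x c else 0 from by
          by_cases h : c = cs <;> simp [h]])]
      rw [Finset.sum_ite_eq' Finset.univ cs x]
      simp
    have := H (fun c => if c = cs then (1:ℝ) else 0) (fun x => by rw [key x]; exact abs_le_G n x cs)
    rwa [key y] at this
  apply max_le
  · -- bsum piece
    apply Finset.sup'_le
    intro l _
    set φ : Coord n → ℝ := fun c => if c.1 = l then (2 / (sb n : ℝ)) * sg (y c) else 0 with hφ
    have key : ∀ x : Coord n → ℝ,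
        (∑ c : Coord n, φ c * x c) = (2 / (sb n : ℝ)) * ∑ p : Bt n, sg (y (l, p)) * x (l, p) := by
      intro x
      rw [Fintype.sum_prod_type]
      rw [Finset.mul_sum]
      have hline : ∀ l' : Fin (Lb n), (∑ p : Bt n, φ (l', p) * x (l', p))
          = if l' = l then ∑ p : Bt n, (2 / (sb n : ℝ)) * (sg (y (l, p)) * x (l, p)) else 0 := by
        intro l'
        by_cases h : l' = l
        · subst h
          simp only [hφ, if_pos rfl]
          congr 1; funext p; ring
        · simp only [hφ, if_neg h]
          simp
      simp only [hline]
      rw [Finset.sum_ite_eq' Finset.univ l _]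
      simp
    have adm : ∀ x : Coord n → ℝ, |∑ c : Coord n, φ c * x c| ≤ Gn n x := by
      intro x
      rw [key x]
      refine le_trans ?_ (bsum_le_G n x l)
      rw [bsum, abs_mul, abs_of_nonneg (by positivity : (0:ℝ) ≤ 2 / (sb n : ℝ))]
      apply mul_le_mul_of_nonneg_left _ (by positivity)
      refine le_trans (Finset.abs_sum_le_sum_abs _ _) (Finset.sum_le_sum (fun p _ => ?_))
      rw [abs_mul, abs_sg, one_mul]
    have hval : (∑ c : Coord n, φ c * y c) = bsum n y l := by
      rw [key y, bsum]
      congr 1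
      exact Finset.sum_congr rfl (fun p _ => sg_mul_self _)
    have := H φ adm
    rw [hval] at this
    have hb : 0 ≤ bsum n y l := by
      rw [bsum]; positivity
    rwa [abs_of_nonneg hb] at this
  · -- dsum piece
    obtain ⟨Ts, hTs, hTseq⟩ := Finset.exists_mem_eq_sup' (Tne n)
      (fun T => ∑ l ∈ T, bmax n y l)
    have hpl : ∀ l : Fin (Lb n), ∃ p : Bt n, bmax n y l = |y (l, p)| := by
      intro l
      obtain ⟨p, _, hp⟩ := Finset.exists_mem_eq_sup' (Finset.univ_nonempty (α := Bt n))
        (fun p => |y (l, p)|)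
      exact ⟨p, hp⟩
    choose pl hplspec using hpl
    set φ : Coord n → ℝ := fun c =>
      if c.1 ∈ Ts ∧ c.2 = pl c.1 then (2 / (tb n : ℝ)) * sg (y (c.1, pl c.1)) else 0 with hφ
    have key : ∀ x : Coord n → ℝ,
        (∑ c : Coord n, φ c * x c)
          = (2 / (tb n : ℝ)) * ∑ l ∈ Ts, sg (y (l, pl l)) * x (l, pl l) := by
      intro x
      rw [Fintype.sum_prod_type]
      have inner : ∀ l' : Fin (Lb n), (∑ p : Bt n, φ (l', p) * x (l', p))
          = if l' ∈ Ts then (2 / (tb n : ℝ)) * (sg (y (l', pl l')) * x (l', pl l')) else 0 := by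
        intro l'
        by_cases h : l' ∈ Ts
        · rw [if_pos h]
          have hline : ∀ p : Bt n, φ (l', p) * x (l', p)
              = if p = pl l' then (2 / (tb n : ℝ)) * (sg (y (l', pl l')) * x (l', p)) else 0 := by
            intro p
            by_cases hp : p = pl l'
            · subst hp
              simp [hφ, h]
              ring
            · simp [hφ, hp]
          simp only [hline]
          rw [Finset.sum_ite_eq' Finset.univ (pl l') _]
          simp
        · rw [if_neg h]
          apply Finset.sum_eq_zero
          intro p _
          simp only [hφ]
          rw [if_neg (by tauto), zero_mul]
      simp only [inner]
      rw [Finset.sum_ite_mem, Finset.univ_inter, Finset.mul_sum]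
    have adm : ∀ x : Coord n → ℝ, |∑ c : Coord n, φ c * x c| ≤ Gn n x := by
      intro x
      rw [key x]
      refine le_trans ?_ (dsum_le_G n x)
      rw [abs_mul, abs_of_nonneg (by positivity : (0:ℝ) ≤ 2 / (tb n : ℝ))]
      have h1 : |∑ l ∈ Ts, sg (y (l, pl l)) * x (l, pl l)| ≤ ∑ l ∈ Ts, bmax n x l := by
        refine le_trans (Finset.abs_sum_le_sum_abs _ _) (Finset.sum_le_sum (fun l _ => ?_))
        rw [abs_mul, abs_sg, one_mul]
        exact abs_le_bmax n x l (pl l)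
      refine le_trans (mul_le_mul_of_nonneg_left h1 (by positivity)) ?_
      rw [dsum]
      apply mul_le_mul_of_nonneg_left _ (by positivity)
      exact Finset.le_sup' (fun T => ∑ l ∈ T, bmax n x l) hTs
    have hval : (∑ c : Coord n, φ c * y c) = dsum n y := by
      rw [key y, dsum, hTseq]
      congr 1
      refine Finset.sum_congr rfl (fun l _ => ?_)
      rw [sg_mul_self, hplspec l]
    have := H φ adm
    rw [hval] at this
    have hd : 0 ≤ dsum n y := by
      have h0 : (0:ℝ) ≤ (Finset.univ.powersetCard (tb n)).sup' (Tne n)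
          (fun T => ∑ l ∈ T, bmax n y l) :=
        le_trans (Finset.sum_nonneg (fun l _ => bmax_nonneg n y l))
          (Finset.le_sup' (fun T => ∑ l ∈ T, bmax n y l) hTs)
      rw [dsum]
      exact mul_nonneg (by positivity) h0
    rwa [abs_of_nonneg hd] at this

/-! ### local almost-squareness lemma -/

lemma walsh_pm (n : ℕ) (q p : Bt n) : walsh n q p = 1 ∨ walsh n q p = -1 :=
  (abs_eq (by norm_num : (0:ℝ) ≤ 1)).mp (abs_walsh n q p)

lemma key_pt (a c : ℝ) (hc : c = 1/2 ∨ c = -1/2) :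
    |a + c| ≤ 1/2 + 2*c*a + 2*max (|a| - 1/2) 0 := by
  rcases hc with rfl | rfl <;>
    rcases abs_cases a with ⟨e1, e2⟩ | ⟨e1, e2⟩ <;>
    rcases max_cases (|a| - 1/2) (0:ℝ) with ⟨m1, m2⟩ | ⟨m1, m2⟩ <;>
    rcases abs_cases (a + (1/2:ℝ)) with ⟨g1, g2⟩ | ⟨g1, g2⟩ <;>
    rcases abs_cases (a + (-1/2:ℝ)) with ⟨k1, k2⟩ | ⟨k1, k2⟩ <;>
    linarith

lemma arith1 (n : ℕ) : (n+1)*((n+2)^2) < 2^(3*(n+2)) := by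
  calc (n+1)*((n+2)^2) < (n+2)*((n+2)^2) := by nlinarith
  _ = (n+2)^3 := by ring
  _ ≤ (2^(n+2))^3 := Nat.pow_le_pow_left (le_of_lt Nat.lt_two_pow_self) 3
  _ = 2^(3*(n+2)) := by rw [← pow_mul, mul_comm]

set_option maxHeartbeats 1000000 in
theorem local_asq (n K : ℕ) (hK : K ≤ n + 1) (f : Fin K → (Coord n → ℝ))
    (hf : ∀ i, Gn n (f i) ≤ 1) :
    ∃ h : Coord n → ℝ, Gn n h = 1 ∧
      ∀ i, Gn n (f i + h) ≤ 1 + 4 / (tb n : ℝ) ∧ Gn n (f i - h) ≤ 1 + 4 / (tb n : ℝ) := by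
  classical
  have hs := sb_pos n
  have ht := tb_pos n
  have ht1 : (1:ℝ) ≤ (tb n : ℝ) := by
    have : 1 ≤ tb n := by unfold tb; omega
    exact_mod_cast this
  set θ : ℝ := 1/2 + 1/(2*(tb n : ℝ)) with hθ
  -- Step 1 : each f i has few dirty blocks
  have hdirty : ∀ i, ((Finset.univ.filter (fun l => θ < bmax n (f i) l)).card ≤ tb n - 1) := by
    intro i
    by_contra hc
    push_neg at hc
    have hcard : tb n ≤ (Finset.univ.filter (fun l => θ < bmax n (f i) l)).card := by omega
    obtain ⟨T, hTsub, hTcard⟩ := Finset.exists_subset_card_eq hcard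
    have hTmem : T ∈ Finset.univ.powersetCard (tb n) :=
      Finset.mem_powersetCard.mpr ⟨Finset.subset_univ T, hTcard⟩
    have hTne : T.Nonempty := by
      rw [← Finset.card_pos, hTcard]; unfold tb; omega
    have hsum : (tb n : ℝ) * θ < ∑ l ∈ T, bmax n (f i) l := by
      have hlt : ∀ l ∈ T, θ < bmax n (f i) l := fun l hl => (Finset.mem_filter.mp (hTsub hl)).2
      calc (tb n : ℝ) * θ = ∑ _l ∈ T, θ := by
            rw [Finset.sum_const, hTcard, nsmul_eq_mul]
      _ < ∑ l ∈ T, bmax n (f i) l := Finset.sum_lt_sum_of_nonempty hTne hlt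
    have h2 : ∑ l ∈ T, bmax n (f i) l ≤ ((tb n:ℝ)/2) * dsum n (f i) := sumT_le_dsum n _ hTmem
    have h3 : dsum n (f i) ≤ 1 := le_trans (dsum_le_G n _) (hf i)
    have h4 : (tb n:ℝ) * θ = (tb n:ℝ)/2 + 1/2 := by
      rw [hθ]; field_simp
    have h5 : ((tb n:ℝ)/2) * dsum n (f i) ≤ (tb n:ℝ)/2 := by
      calc ((tb n:ℝ)/2) * dsum n (f i) ≤ ((tb n:ℝ)/2) * 1 :=
            mul_le_mul_of_nonneg_left h3 (by positivity)
      _ = (tb n:ℝ)/2 := mul_one _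
    rw [h4] at hsum
    linarith
  -- Step 2 : common clean block l₀
  have hex_clean : ∃ l₀ : Fin (Lb n), ∀ i, bmax n (f i) l₀ ≤ θ := by
    set B := (Finset.univ : Finset (Fin K)).biUnion
      (fun i => Finset.univ.filter (fun l => θ < bmax n (f i) l)) with hB
    have hcardB : B.card ≤ K * (tb n - 1) := by
      refine le_trans Finset.card_biUnion_le ?_
      calc ∑ i : Fin K, (Finset.univ.filter (fun l => θ < bmax n (f i) l)).card
          ≤ ∑ _i : Fin K, (tb n - 1) := Finset.sum_le_sum (fun i _ => hdirty i)
      _ = K * (tb n - 1) := by rw [Finset.sum_const, Finset.card_univ, Fintype.card_fin, smul_eq_mul]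
    have hlt : K * (tb n - 1) < Lb n := by
      have he : tb n - 1 = n + 1 := by unfold tb; omega
      rw [he]
      have h1 : K * (n + 1) ≤ (n+1)*(n+1) := Nat.mul_le_mul_right _ hK
      unfold Lb
      omega
    have hne : (Finset.univ \ B).Nonempty := by
      rw [Finset.sdiff_nonempty]
      intro hsub
      have := Finset.card_le_card hsub
      rw [Finset.card_univ, Fintype.card_fin] at this
      omega
    obtain ⟨l₀, hl₀⟩ := hne
    refine ⟨l₀, fun i => ?_⟩
    rw [Finset.mem_sdiff] at hl₀
    by_contra hcl
    push_neg at hcl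
    exact hl₀.2 (Finset.mem_biUnion.mpr ⟨i, Finset.mem_univ i,
      Finset.mem_filter.mpr ⟨Finset.mem_univ _, hcl⟩⟩)
  obtain ⟨l₀, hl₀⟩ := hex_clean
  have hclean : ∀ i p, |f i (l₀, p)| ≤ θ := fun i p => le_trans (abs_le_bmax n _ l₀ p) (hl₀ i)
  -- Step 3 : Bessel argument, good Walsh index q₀
  set y : Fin K → Bt n → ℝ := fun i p => f i (l₀, p) with hy
  have hbad : ∀ i, ((Finset.univ.filter
      (fun q => (sb n : ℝ)/(tb n : ℝ) < |∑ p : Bt n, walsh n q p * y i p|)).card ≤ (tb n)^2) := by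
    intro i
    set B := Finset.univ.filter
      (fun q => (sb n : ℝ)/(tb n : ℝ) < |∑ p : Bt n, walsh n q p * y i p|) with hBdef
    have h1 : (B.card : ℝ) * ((sb n:ℝ)/(tb n:ℝ))^2 ≤ ∑ q ∈ B, (∑ p : Bt n, walsh n q p * y i p)^2 := by
      have hconst : (B.card : ℝ) * ((sb n:ℝ)/(tb n:ℝ))^2
          = ∑ _q ∈ B, ((sb n:ℝ)/(tb n:ℝ))^2 := by
        rw [Finset.sum_const, nsmul_eq_mul]
      rw [hconst]
      refine Finset.sum_le_sum (fun q hq => ?_)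
      have hmem := (Finset.mem_filter.mp hq).2
      have h0 : (0:ℝ) ≤ (sb n:ℝ)/(tb n:ℝ) := by positivity
      calc ((sb n:ℝ)/(tb n:ℝ))^2 ≤ |∑ p : Bt n, walsh n q p * y i p|^2 :=
            pow_le_pow_left₀ h0 (le_of_lt hmem) 2
      _ = (∑ p : Bt n, walsh n q p * y i p)^2 := sq_abs _
    have h2 : ∑ q ∈ B, (∑ p : Bt n, walsh n q p * y i p)^2
        ≤ ∑ q : Bt n, (∑ p : Bt n, walsh n q p * y i p)^2 :=
      Finset.sum_le_sum_of_subset_of_nonneg (Finset.filter_subset _ _)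
        (fun q _ _ => sq_nonneg _)
    have h3 := walsh_parseval n (y i)
    have h4 : ∑ p : Bt n, (y i p)^2 ≤ (sb n : ℝ) := by
      calc ∑ p : Bt n, (y i p)^2 ≤ ∑ _p : Bt n, (1:ℝ) := by
            refine Finset.sum_le_sum (fun p _ => ?_)
            have habs : |y i p| ≤ 1 := le_trans (abs_le_G n (f i) (l₀, p)) (hf i)
            calc (y i p)^2 = |y i p|^2 := (sq_abs _).symm
            _ ≤ 1 := by nlinarith [abs_nonneg (y i p)]
      _ = (sb n : ℝ) := by
            rw [Finset.sum_const, Finset.card_univ, card_Bt, nsmul_eq_mul, mul_one]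
    have hfinal : (B.card : ℝ) ≤ ((tb n)^2 : ℕ) := by
      push_cast
      by_contra hcon
      push_neg at hcon
      have hq2 : (0:ℝ) < ((sb n:ℝ)/(tb n:ℝ))^2 := by positivity
      have hchain : (B.card : ℝ) * ((sb n:ℝ)/(tb n:ℝ))^2 ≤ (sb n:ℝ) * (sb n : ℝ) := by
        calc (B.card : ℝ) * ((sb n:ℝ)/(tb n:ℝ))^2 ≤ _ := h1
        _ ≤ _ := h2
        _ = (sb n : ℝ) * ∑ p : Bt n, (y i p)^2 := h3
        _ ≤ (sb n:ℝ) * (sb n:ℝ) := mul_le_mul_of_nonneg_left h4 (le_of_lt hs)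
      have hgt : ((tb n:ℝ))^2 * ((sb n:ℝ)/(tb n:ℝ))^2 < (B.card : ℝ) * ((sb n:ℝ)/(tb n:ℝ))^2 :=
        mul_lt_mul_of_pos_right hcon hq2
      have heq : ((tb n:ℝ))^2 * ((sb n:ℝ)/(tb n:ℝ))^2 = (sb n:ℝ) * (sb n:ℝ) := by
        field_simp
      linarith
    exact_mod_cast hfinal
  have hex_q : ∃ q₀ : Bt n, ∀ i, |∑ p : Bt n, walsh n q₀ p * y i p| ≤ (sb n : ℝ)/(tb n : ℝ) := by
    set B := (Finset.univ : Finset (Fin K)).biUnion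
      (fun i => Finset.univ.filter
        (fun q => (sb n : ℝ)/(tb n : ℝ) < |∑ p : Bt n, walsh n q p * y i p|)) with hB
    have hcardB : B.card ≤ K * (tb n)^2 := by
      refine le_trans Finset.card_biUnion_le ?_
      calc _ ≤ ∑ _i : Fin K, (tb n)^2 := Finset.sum_le_sum (fun i _ => hbad i)
      _ = K * (tb n)^2 := by rw [Finset.sum_const, Finset.card_univ, Fintype.card_fin, smul_eq_mul]
    have hlt : K * (tb n)^2 < sb n := by
      calc K * (tb n)^2 ≤ (n+1) * (tb n)^2 := Nat.mul_le_mul_right _ hK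
      _ < 2^(3*(n+2)) := by unfold tb; exact arith1 n
      _ = sb n := by rw [sb, dd]
    have hne : (Finset.univ \ B).Nonempty := by
      rw [Finset.sdiff_nonempty]
      intro hsub
      have := Finset.card_le_card hsub
      rw [Finset.card_univ, card_Bt] at this
      omega
    obtain ⟨q₀, hq₀⟩ := hne
    rw [Finset.mem_sdiff] at hq₀
    refine ⟨q₀, fun i => ?_⟩
    by_contra hcl
    push_neg at hcl
    exact hq₀.2 (Finset.mem_biUnion.mpr ⟨i, Finset.mem_univ i,
      Finset.mem_filter.mpr ⟨Finset.mem_univ _, hcl⟩⟩)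
  obtain ⟨q₀, hq₀⟩ := hex_q
  -- Step 4 : the almost-square direction h
  set h : Coord n → ℝ := fun c => if c.1 = l₀ then walsh n q₀ c.2 / 2 else 0 with hhdef
  have habs_h_l₀ : ∀ p : Bt n, |h (l₀, p)| = 1/2 := by
    intro p
    simp only [hhdef, if_pos rfl]
    rw [abs_div, abs_walsh]
    norm_num
  have habs_h_ne : ∀ l p, l ≠ l₀ → h (l, p) = 0 := by
    intro l p hl
    simp only [hhdef, if_neg hl]
  have hasup_h : asup n h ≤ 1/2 := by
    apply asup_le
    rintro ⟨l, p⟩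
    by_cases hl : l = l₀
    · subst hl; rw [habs_h_l₀]
    · rw [habs_h_ne l p hl]; norm_num
  have hbsum_l₀ : bsum n h l₀ = 1 := by
    rw [bsum]
    have : ∀ p : Bt n, |h (l₀, p)| = 1/2 := habs_h_l₀
    rw [Finset.sum_congr rfl (fun p _ => this p)]
    rw [Finset.sum_const, Finset.card_univ, card_Bt, nsmul_eq_mul]
    field_simp
  have hbsum_ne : ∀ l, l ≠ l₀ → bsum n h l = 0 := by
    intro l hl
    rw [bsum]
    rw [Finset.sum_congr rfl (fun p _ => by rw [habs_h_ne l p hl, abs_zero])]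
    rw [Finset.sum_const]
    simp
  have hbmax_h : ∀ l, bmax n h l ≤ (if l = l₀ then (1:ℝ)/2 else 0) := by
    intro l
    apply bmax_le
    intro p
    by_cases hl : l = l₀
    · subst hl; rw [habs_h_l₀, if_pos rfl]
    · rw [habs_h_ne l p hl, abs_zero, if_neg hl]
  have hdsum_h : dsum n h ≤ 1/(tb n : ℝ) := by
    rw [dsum]
    have hsup : (Finset.univ.powersetCard (tb n)).sup' (Tne n)
        (fun T => ∑ l ∈ T, bmax n h l) ≤ 1/2 := by
      apply Finset.sup'_le
      intro T _
      calc ∑ l ∈ T, bmax n h l ≤ ∑ l ∈ T, (if l = l₀ then (1:ℝ)/2 else 0) :=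
            Finset.sum_le_sum (fun l _ => hbmax_h l)
      _ = if l₀ ∈ T then (1:ℝ)/2 else 0 := Finset.sum_ite_eq' T l₀ (fun _ => (1:ℝ)/2)
      _ ≤ 1/2 := by split <;> norm_num
    calc (2/(tb n:ℝ)) * _ ≤ (2/(tb n:ℝ)) * (1/2) := mul_le_mul_of_nonneg_left hsup (by positivity)
    _ = 1/(tb n:ℝ) := by field_simp
  have hGh : Gn n h = 1 := by
    apply le_antisymm
    · apply max_le
      · linarith
      apply max_le
      · apply Finset.sup'_le
        intro l _
        by_cases hl : l = l₀
        · subst hl; rw [hbsum_l₀]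
        · rw [hbsum_ne l hl]; norm_num
      · have hinv : 1/(tb n:ℝ) ≤ 1 := by
          rw [div_le_one ht]; exact ht1
        linarith [hdsum_h]
    · rw [← hbsum_l₀]
      exact bsum_le_G n h l₀
  -- Step 5 : the norm bounds for f i ± h
  have hq4 : 1/(2*(tb n:ℝ)) ≤ 4/(tb n:ℝ) := by
    rw [div_le_div_iff₀ (by positivity) ht]
    nlinarith
  have h4t : 0 ≤ 4/(tb n : ℝ) := by positivity
  have main : ∀ (i : Fin K) (e : ℝ), (e = 1 ∨ e = -1) →
      Gn n (f i + e • h) ≤ 1 + 4/(tb n:ℝ) := by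
    intro i e he
    have habse : |e| = 1 := by rcases he with rfl | rfl <;> norm_num
    apply max_le
    · -- asup part
      apply asup_le
      rintro ⟨l, p⟩
      by_cases hl : l = l₀
      · rw [hl]
        have h1 : |(f i + e • h) (l₀, p)| ≤ |f i (l₀,p)| + |e * h (l₀,p)| := by
          rw [Pi.add_apply, Pi.smul_apply, smul_eq_mul]
          exact abs_add_le _ _
        have h2 : |e * h (l₀,p)| = 1/2 := by
          rw [abs_mul, habse, one_mul, habs_h_l₀]
        rw [h2] at h1
        have := hclean i p
        rw [hθ] at this
        linarith
      · have hzero : (f i + e • h) (l, p) = f i (l, p) := by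
          rw [Pi.add_apply, Pi.smul_apply, smul_eq_mul, habs_h_ne l p hl, mul_zero, add_zero]
        rw [hzero]
        linarith [le_trans (abs_le_G n (f i) (l,p)) (hf i)]
    apply max_le
    · -- bsum part
      apply Finset.sup'_le
      intro l _
      by_cases hl : l = l₀
      · rw [hl]
        rw [bsum]
        have key : ∀ p : Bt n, |(f i + e • h) (l₀, p)|
            ≤ 1/2 + (e * walsh n q₀ p) * y i p + 2*max (|y i p| - 1/2) 0 := by
          intro p
          have heq : (f i + e • h) (l₀, p) = y i p + (e * walsh n q₀ p)/2 := by
            have hh1 : h (l₀, p) = walsh n q₀ p / 2 := by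
              simp [hhdef]
            have hy1 : y i p = f i (l₀, p) := rfl
            rw [Pi.add_apply, Pi.smul_apply, smul_eq_mul, hh1, hy1]
            ring
          rw [heq]
          have hcase : (e * walsh n q₀ p)/2 = 1/2 ∨ (e * walsh n q₀ p)/2 = -1/2 := by
            rcases he with rfl | rfl <;> rcases walsh_pm n q₀ p with hw | hw <;>
              rw [hw] <;> norm_num
          have := key_pt (y i p) ((e * walsh n q₀ p)/2) hcase
          calc |y i p + (e * walsh n q₀ p)/2|
              ≤ 1/2 + 2*((e * walsh n q₀ p)/2)*(y i p) + 2*max (|y i p| - 1/2) 0 := this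
          _ = 1/2 + (e * walsh n q₀ p) * y i p + 2*max (|y i p| - 1/2) 0 := by ring
        have hsumbound : ∑ p : Bt n, |(f i + e • h) (l₀, p)|
            ≤ (sb n:ℝ)/2 + (sb n:ℝ)/(tb n:ℝ) + (sb n:ℝ)/(tb n:ℝ) := by
          calc ∑ p : Bt n, |(f i + e • h) (l₀, p)|
              ≤ ∑ p : Bt n, (1/2 + (e * walsh n q₀ p) * y i p + 2*max (|y i p| - 1/2) 0) :=
                Finset.sum_le_sum (fun p _ => key p)
          _ = (sb n:ℝ)/2 + e * (∑ p : Bt n, walsh n q₀ p * y i p)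
                + 2 * ∑ p : Bt n, max (|y i p| - 1/2) 0 := by
                rw [Finset.sum_add_distrib, Finset.sum_add_distrib]
                congr 1
                · congr 1
                  · rw [Finset.sum_const, Finset.card_univ, card_Bt, nsmul_eq_mul]
                    ring
                  · rw [Finset.mul_sum]
                    exact Finset.sum_congr rfl (fun p _ => by ring)
                · rw [Finset.mul_sum]
          _ ≤ (sb n:ℝ)/2 + (sb n:ℝ)/(tb n:ℝ) + (sb n:ℝ)/(tb n:ℝ) := by
                have hb1 : e * (∑ p : Bt n, walsh n q₀ p * y i p) ≤ (sb n:ℝ)/(tb n:ℝ) := by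
                  calc e * _ ≤ |e * (∑ p : Bt n, walsh n q₀ p * y i p)| := le_abs_self _
                  _ = |∑ p : Bt n, walsh n q₀ p * y i p| := by rw [abs_mul, habse, one_mul]
                  _ ≤ (sb n:ℝ)/(tb n:ℝ) := hq₀ i
                have hb2 : ∑ p : Bt n, max (|y i p| - 1/2) 0 ≤ (sb n:ℝ) * (1/(2*(tb n:ℝ))) := by
                  calc ∑ p : Bt n, max (|y i p| - 1/2) 0
                      ≤ ∑ _p : Bt n, 1/(2*(tb n:ℝ)) := by
                        refine Finset.sum_le_sum (fun p _ => ?_)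
                        apply max_le
                        · have := hclean i p
                          rw [hθ] at this
                          linarith
                        · positivity
                  _ = (sb n:ℝ) * (1/(2*(tb n:ℝ))) := by
                        rw [Finset.sum_const, Finset.card_univ, card_Bt, nsmul_eq_mul]
                have : 2 * ∑ p : Bt n, max (|y i p| - 1/2) 0 ≤ (sb n:ℝ)/(tb n:ℝ) := by
                  calc 2 * ∑ p : Bt n, max (|y i p| - 1/2) 0
                      ≤ 2 * ((sb n:ℝ) * (1/(2*(tb n:ℝ)))) := by linarith
                  _ = (sb n:ℝ)/(tb n:ℝ) := by field_simp
                linarith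
        calc (2/(sb n:ℝ)) * ∑ p : Bt n, |(f i + e • h) (l₀, p)|
            ≤ (2/(sb n:ℝ)) * ((sb n:ℝ)/2 + (sb n:ℝ)/(tb n:ℝ) + (sb n:ℝ)/(tb n:ℝ)) :=
              mul_le_mul_of_nonneg_left hsumbound (by positivity)
        _ = 1 + 4/(tb n:ℝ) := by field_simp; ring
      · have hzero : bsum n (f i + e • h) l = bsum n (f i) l := by
          rw [bsum, bsum]
          congr 1
          refine Finset.sum_congr rfl (fun p _ => ?_)
          rw [Pi.add_apply, Pi.smul_apply, smul_eq_mul, habs_h_ne l p hl, mul_zero, add_zero]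
        rw [hzero]
        linarith [le_trans (bsum_le_G n (f i) l) (hf i)]
    · -- dsum part
      have h1 : dsum n (f i + e • h) ≤ dsum n (f i) + dsum n (e • h) := dsum_add n (f i) (e • h)
      have h2 : dsum n (e • h) = dsum n h := by rw [dsum_smul, habse, one_mul]
      have h3 : dsum n (f i) ≤ 1 := le_trans (dsum_le_G n _) (hf i)
      have hinv : 1/(tb n:ℝ) ≤ 4/(tb n:ℝ) := by
        rw [div_le_div_iff₀ ht ht]
        nlinarith
      linarith [hdsum_h]
  refine ⟨h, hGh, fun i => ⟨?_, ?_⟩⟩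
  · have := main i 1 (Or.inl rfl)
    rwa [one_smul] at this
  · have := main i (-1) (Or.inr rfl)
    rwa [neg_one_smul, ← sub_eq_add_neg] at this

/-! ## The global space -/

open Filter Topology ZeroAtInfty NormedSpace

def Idx : Type := Σ n : ℕ, Coord n

instance : Countable Idx := by unfold Idx; infer_instance
instance : TopologicalSpace Idx := by unfold Idx; infer_instance
instance : DiscreteTopology Idx := by unfold Idx; exact Sigma.discreteTopology

instance : Infinite Idx :=
  Infinite.of_injective (fun n : ℕ => (⟨n, Classical.arbitrary _⟩ : Idx))
    (fun a b h => congrArg Sigma.fst h)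

/-- restriction of a function to the `n`-th superblock -/
def xblk (x : C₀(Idx, ℝ)) (n : ℕ) : Coord n → ℝ := fun c => x ⟨n, c⟩

lemma abs_apply_le_norm (x : C₀(Idx, ℝ)) (j : Idx) : |x j| ≤ ‖x‖ := by
  rw [← ZeroAtInftyContinuousMap.norm_toBCF_eq_norm]
  exact BoundedContinuousFunction.norm_coe_le_norm x.toBCF j

lemma norm_le_of_pointwise (x : C₀(Idx, ℝ)) {M : ℝ} (hM : 0 ≤ M)
    (h : ∀ j, |x j| ≤ M) : ‖x‖ ≤ M := by
  rw [← ZeroAtInftyContinuousMap.norm_toBCF_eq_norm]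
  exact (BoundedContinuousFunction.norm_le hM).mpr h

/-- the new norm -/
noncomputable def znorm (x : C₀(Idx, ℝ)) : ℝ := ⨆ n, Gn n (xblk x n)

lemma zbdd (x : C₀(Idx, ℝ)) : BddAbove (Set.range fun n => Gn n (xblk x n)) := by
  refine ⟨2 * ‖x‖, ?_⟩
  rintro - ⟨n, rfl⟩
  refine le_trans (G_le_two_asup n _) ?_
  have : asup n (xblk x n) ≤ ‖x‖ := asup_le n _ (fun c => abs_apply_le_norm x ⟨n, c⟩)
  linarith

lemma G_le_znorm (x : C₀(Idx, ℝ)) (n : ℕ) : Gn n (xblk x n) ≤ znorm x :=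
  le_ciSup (zbdd x) n

lemma znorm_le (x : C₀(Idx, ℝ)) {M : ℝ} (h : ∀ n, Gn n (xblk x n) ≤ M) : znorm x ≤ M :=
  ciSup_le h

lemma znorm_nonneg (x : C₀(Idx, ℝ)) : 0 ≤ znorm x :=
  le_trans (G_nonneg 0 _) (G_le_znorm x 0)

lemma abs_apply_le_znorm (x : C₀(Idx, ℝ)) (j : Idx) : |x j| ≤ znorm x := by
  obtain ⟨n, c⟩ := j
  exact le_trans (abs_le_G n (xblk x n) c) (G_le_znorm x n)

lemma norm_le_znorm (x : C₀(Idx, ℝ)) : ‖x‖ ≤ znorm x :=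
  norm_le_of_pointwise x (znorm_nonneg x) (abs_apply_le_znorm x)

lemma znorm_le_two_norm (x : C₀(Idx, ℝ)) : znorm x ≤ 2 * ‖x‖ := by
  refine znorm_le x (fun n => le_trans (G_le_two_asup n _) ?_)
  have : asup n (xblk x n) ≤ ‖x‖ := asup_le n _ (fun c => abs_apply_le_norm x ⟨n, c⟩)
  linarith

lemma xblk_add (x y : C₀(Idx, ℝ)) (n : ℕ) : xblk (x + y) n = xblk x n + xblk y n := rfl
lemma xblk_neg (x : C₀(Idx, ℝ)) (n : ℕ) : xblk (-x) n = -(xblk x n) := rfl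
lemma xblk_smul (a : ℝ) (x : C₀(Idx, ℝ)) (n : ℕ) : xblk (a • x) n = a • (xblk x n) := rfl
lemma xblk_zero (n : ℕ) : xblk (0 : C₀(Idx, ℝ)) n = 0 := rfl

lemma znorm_add (x y : C₀(Idx, ℝ)) : znorm (x + y) ≤ znorm x + znorm y := by
  refine znorm_le _ (fun n => ?_)
  rw [xblk_add]
  exact le_trans (G_add n _ _) (add_le_add (G_le_znorm x n) (G_le_znorm y n))

lemma znorm_neg (x : C₀(Idx, ℝ)) : znorm (-x) = znorm x := by
  unfold znorm
  congr 1
  funext n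
  rw [xblk_neg, G_neg]

lemma znorm_smul_le (a : ℝ) (x : C₀(Idx, ℝ)) : znorm (a • x) ≤ |a| * znorm x := by
  refine znorm_le _ (fun n => ?_)
  rw [xblk_smul, G_smul]
  exact mul_le_mul_of_nonneg_left (G_le_znorm x n) (abs_nonneg a)

lemma znorm_zero : znorm (0 : C₀(Idx, ℝ)) = 0 := by
  unfold znorm
  have : ∀ n : ℕ, Gn n (xblk (0 : C₀(Idx, ℝ)) n) = 0 := fun n => by rw [xblk_zero, G_zero]
  simp only [this]
  exact ciSup_const

lemma znorm_eq_zero {x : C₀(Idx, ℝ)} (h : znorm x = 0) : x = 0 := by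
  ext j
  have h1 := abs_apply_le_znorm x j
  rw [h] at h1
  have := abs_nonneg (x j)
  have : |x j| = 0 := le_antisymm h1 this
  simpa using this

/-! ## the renormed space `Zspace` -/

def Zspace : Type := C₀(Idx, ℝ)

def toC (z : Zspace) : C₀(Idx, ℝ) := z
def ofC (x : C₀(Idx, ℝ)) : Zspace := x

instance : AddCommGroup Zspace := inferInstanceAs (AddCommGroup C₀(Idx, ℝ))
noncomputable instance : Module ℝ Zspace := inferInstanceAs (Module ℝ C₀(Idx, ℝ))

noncomputable instance : NormedAddCommGroup Zspace :=
  AddGroupNorm.toNormedAddCommGroup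
    { toFun := fun z => znorm (toC z)
      map_zero' := znorm_zero
      add_le' := fun x y => znorm_add (toC x) (toC y)
      neg' := fun x => znorm_neg (toC x)
      eq_zero_of_map_eq_zero' := fun x h => znorm_eq_zero h }

lemma Z_norm_def (z : Zspace) : ‖z‖ = znorm (toC z) := rfl

noncomputable instance : NormedSpace ℝ Zspace where
  norm_smul_le a z := by
    rw [Z_norm_def, Z_norm_def, Real.norm_eq_abs]
    exact znorm_smul_le a (toC z)

lemma Z_dist_def (z w : Zspace) : dist z w = znorm (toC z - toC w) := by rw [dist_eq_norm]; rfl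

instance : CompleteSpace Zspace := by
  apply Metric.complete_of_cauchySeq_tendsto
  intro u hu
  -- the sequence is Cauchy in C₀
  have hC : CauchySeq (fun k => toC (u k)) := by
    rw [Metric.cauchySeq_iff] at hu ⊢
    intro ε hε
    obtain ⟨N, hN⟩ := hu ε hε
    refine ⟨N, fun m hm k hk => ?_⟩
    have := hN m hm k hk
    rw [Z_dist_def] at this
    calc dist (toC (u m)) (toC (u k)) = ‖toC (u m) - toC (u k)‖ := dist_eq_norm _ _
    _ ≤ znorm (toC (u m) - toC (u k)) := norm_le_znorm _
    _ < ε := this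
  obtain ⟨x, hx⟩ := cauchySeq_tendsto_of_complete hC
  refine ⟨ofC x, ?_⟩
  rw [Metric.tendsto_atTop] at hx ⊢
  intro ε hε
  obtain ⟨N, hN⟩ := hx (ε/2) (by linarith)
  refine ⟨N, fun k hk => ?_⟩
  have := hN k hk
  rw [Z_dist_def]
  calc znorm (toC (u k) - toC (ofC x)) ≤ 2 * ‖toC (u k) - x‖ := znorm_le_two_norm _
  _ = 2 * dist (toC (u k)) x := by rw [dist_eq_norm]
  _ < ε := by linarith

/-! ## `Zspace` is isomorphic to `c₀` -/

noncomputable def eIdx : ℕ ≃ Idx := by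
  letI : Encodable Idx := Encodable.ofCountable Idx
  letI : Denumerable Idx := Denumerable.ofEncodableOfInfinite Idx
  exact (Denumerable.eqv Idx).symm

/-- build a C₀ function on a discrete space from a cofinitely-vanishing function -/
def mkC0 {α : Type*} [TopologicalSpace α] [DiscreteTopology α] (g : α → ℝ)
    (hg : Tendsto g cofinite (𝓝 0)) : C₀(α, ℝ) :=
  ⟨⟨g, continuous_of_discreteTopology⟩, by rwa [cocompact_eq_cofinite]⟩

lemma mkC0_apply {α : Type*} [TopologicalSpace α] [DiscreteTopology α] (g : α → ℝ)
    (hg : Tendsto g cofinite (𝓝 0)) (a : α) : mkC0 g hg a = g a := rfl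

lemma zero_at_cofinite {α : Type*} [TopologicalSpace α] [DiscreteTopology α]
    (f : C₀(α, ℝ)) : Tendsto (⇑f) cofinite (𝓝 0) := by
  have := zero_at_infty f
  rwa [cocompact_eq_cofinite] at this

/-- transport of `C₀` along a bijection of discrete spaces -/
noncomputable def transC0 : C₀(ℕ, ℝ) → C₀(Idx, ℝ) := fun f =>
  mkC0 (fun j => f (eIdx.symm j))
    (Tendsto.comp (zero_at_cofinite f) (eIdx.symm.injective.tendsto_cofinite))

noncomputable def transC0' : C₀(Idx, ℝ) → C₀(ℕ, ℝ) := fun f =>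
  mkC0 (fun k => f (eIdx k))
    (Tendsto.comp (zero_at_cofinite f) (eIdx.injective.tendsto_cofinite))

noncomputable def c0LEquivZ : C₀(ℕ, ℝ) ≃ₗ[ℝ] Zspace :=
  { toFun := fun f => ofC (transC0 f)
    map_add' := fun f g => ZeroAtInftyContinuousMap.ext (fun j => rfl)
    map_smul' := fun a f => ZeroAtInftyContinuousMap.ext (fun j => rfl)
    invFun := fun z => transC0' (toC z)
    left_inv := fun f => ZeroAtInftyContinuousMap.ext (fun k => by
      show f (eIdx.symm (eIdx k)) = f k
      rw [Equiv.symm_apply_apply])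
    right_inv := fun z => ZeroAtInftyContinuousMap.ext (fun j => by
      show (toC z) (eIdx (eIdx.symm j)) = (toC z) j
      rw [Equiv.apply_symm_apply]) }

/-- the continuous linear equivalence `c₀ ≃ Z` -/
noncomputable def c0EquivZ : C₀(ℕ, ℝ) ≃L[ℝ] Zspace :=
  { c0LEquivZ with
    continuous_toFun := by
      apply AddMonoidHomClass.continuous_of_bound c0LEquivZ.toLinearMap 2
      intro f
      show znorm (transC0 f) ≤ 2 * ‖f‖
      refine le_trans (znorm_le_two_norm _) ?_
      have h1 : ‖transC0 f‖ ≤ ‖f‖ := by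
        apply norm_le_of_pointwise _ (norm_nonneg f)
        intro j
        show |f (eIdx.symm j)| ≤ ‖f‖
        rw [← ZeroAtInftyContinuousMap.norm_toBCF_eq_norm]
        exact BoundedContinuousFunction.norm_coe_le_norm f.toBCF _
      linarith
    continuous_invFun := by
      apply AddMonoidHomClass.continuous_of_bound (c0LEquivZ.symm : Zspace →ₗ[ℝ] C₀(ℕ, ℝ)) 1
      intro f
      show ‖transC0' (toC f)‖ ≤ 1 * ‖f‖
      rw [one_mul]
      have h0 : 0 ≤ ‖f‖ := norm_nonneg f
      rw [← ZeroAtInftyContinuousMap.norm_toBCF_eq_norm]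
      refine (BoundedContinuousFunction.norm_le h0).mpr ?_
      intro k
      show |(toC f) (eIdx k)| ≤ ‖f‖
      exact abs_apply_le_znorm (toC f) _ }

/-! ## bumps, coordinates, truncations -/

lemma tendsto_of_finite_support {α : Type*} (g : α → ℝ) (h : (Function.support g).Finite) :
    Tendsto g cofinite (𝓝 0) := by
  have hev : ∀ᶠ i in cofinite, g i = (0:ℝ) := by
    rw [Filter.eventually_cofinite]
    exact h.subset (fun i hi => by simpa [Function.mem_support] using hi)
  exact Filter.Tendsto.congr' (Filter.EventuallyEq.symm hev) tendsto_const_nhds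

instance : DecidableEq Idx := by unfold Idx; exact inferInstance

noncomputable def ebump (j : Idx) : C₀(Idx, ℝ) :=
  mkC0 (fun i => if i = j then 1 else 0)
    (tendsto_of_finite_support _ ((Set.finite_singleton j).subset (fun i hi => by
      rw [Function.mem_support] at hi
      by_contra hij
      rw [Set.mem_singleton_iff] at hij
      exact hi (if_neg hij))))

lemma ebump_apply (j i : Idx) : (ebump j) i = if i = j then 1 else 0 := rfl

noncomputable def truncC (m : ℕ) (x : C₀(Idx, ℝ)) : C₀(Idx, ℝ) :=
  mkC0 (fun j => if j.1 < m then x j else 0) (by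
    have hb : ∀ j : Idx, ‖(if j.1 < m then x j else 0 : ℝ)‖ ≤ ‖x j‖ := by
      intro j
      by_cases h : j.1 < m <;> simp [h]
    have ht : Tendsto (fun j : Idx => ‖x j‖) cofinite (𝓝 0) := by
      simpa using (zero_at_cofinite x).norm
    exact squeeze_zero_norm hb ht)

lemma truncC_apply (m : ℕ) (x : C₀(Idx, ℝ)) (j : Idx) :
    truncC m x j = if j.1 < m then x j else 0 := rfl

lemma xblk_truncC (m : ℕ) (x : C₀(Idx, ℝ)) (n : ℕ) :
    xblk (truncC m x) n = if n < m then xblk x n else 0 := by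
  funext c
  show truncC m x (⟨n, c⟩ : Idx) = _
  refine (truncC_apply m x ⟨n, c⟩).trans ?_
  by_cases h : n < m <;> simp [h, xblk]

lemma xblk_sub (x y : C₀(Idx, ℝ)) (n : ℕ) : xblk (x - y) n = xblk x n - xblk y n := rfl

lemma znorm_truncC_le (m : ℕ) (x : C₀(Idx, ℝ)) : znorm (truncC m x) ≤ znorm x := by
  refine znorm_le _ (fun n => ?_)
  rw [xblk_truncC]
  by_cases h : n < m
  · rw [if_pos h]; exact G_le_znorm x n
  · rw [if_neg h, G_zero]; exact znorm_nonneg x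

lemma znorm_sub_truncC_le (m : ℕ) (x : C₀(Idx, ℝ)) : znorm (x - truncC m x) ≤ znorm x := by
  refine znorm_le _ (fun n => ?_)
  rw [xblk_sub, xblk_truncC]
  by_cases h : n < m
  · rw [if_pos h, sub_self, G_zero]; exact znorm_nonneg x
  · rw [if_neg h, sub_zero]; exact G_le_znorm x n

/-- the L-splitting inequality at the level of elements -/
lemma znorm_split (m : ℕ) (x y : C₀(Idx, ℝ)) :
    znorm (truncC m x + (y - truncC m y)) ≤ max (znorm x) (znorm y) := by
  refine znorm_le _ (fun n => ?_)
  rw [xblk_add, xblk_sub, xblk_truncC, xblk_truncC]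
  by_cases h : n < m
  · rw [if_pos h, if_pos h, sub_self, add_zero]
    exact le_trans (G_le_znorm x n) (le_max_left _ _)
  · rw [if_neg h, if_neg h, sub_zero, zero_add]
    exact le_trans (G_le_znorm y n) (le_max_right _ _)

/-- tails are small -/
lemma tail_small (x : C₀(Idx, ℝ)) {ε : ℝ} (hε : 0 < ε) :
    ∃ m : ℕ, znorm (x - truncC m x) ≤ ε := by
  have h1 := zero_at_cofinite x
  rw [Metric.tendsto_nhds] at h1
  have h2 := h1 (ε/2) (by linarith)
  rw [Filter.eventually_cofinite] at h2
  have h3 : (Sigma.fst '' {j : Idx | ¬ dist (x j) 0 < ε/2}).Finite := h2.image _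
  obtain ⟨m₀, hm₀⟩ := h3.bddAbove
  refine ⟨m₀ + 1, znorm_le _ (fun n => ?_)⟩
  rw [xblk_sub, xblk_truncC]
  by_cases h : n < m₀ + 1
  · rw [if_pos h, sub_self, G_zero]; linarith
  · rw [if_neg h, sub_zero]
    refine le_trans (G_le_two_asup n _) ?_
    have hsmall : ∀ c : Coord n, |x ⟨n, c⟩| ≤ ε/2 := by
      intro c
      by_contra hc
      push_neg at hc
      have hmem : (⟨n, c⟩ : Idx) ∈ {j : Idx | ¬ dist (x j) 0 < ε/2} := by
        simp only [Set.mem_setOf_eq, Real.dist_eq, sub_zero, not_lt]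
        exact le_of_lt hc
      have : n ∈ Sigma.fst '' {j : Idx | ¬ dist (x j) 0 < ε/2} := ⟨⟨n, c⟩, hmem, rfl⟩
      have := hm₀ this
      omega
    have := asup_le n (xblk x n) hsmall
    linarith

/-- inclusion of one superblock -/
noncomputable def inb (n : ℕ) (h : Coord n → ℝ) : C₀(Idx, ℝ) :=
  mkC0 (fun j => if hj : j.1 = n then h (hj ▸ j.2) else 0)
    (tendsto_of_finite_support _ ((Set.finite_range (fun c : Coord n => (⟨n, c⟩ : Idx))).subset
      (by
        rintro ⟨k, c⟩ hk
        erw [Function.mem_support] at hk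
        by_cases hkn : k = n
        · subst hkn
          exact ⟨c, rfl⟩
        · exfalso
          apply hk
          rw [dif_neg hkn])))

lemma inb_apply_same (n : ℕ) (h : Coord n → ℝ) (c : Coord n) : inb n h ⟨n, c⟩ = h c := by
  show (if hj : (⟨n, c⟩ : Idx).1 = n then h (hj ▸ (⟨n, c⟩ : Idx).2) else 0) = h c
  rw [dif_pos rfl]

lemma inb_apply_ne (n : ℕ) (h : Coord n → ℝ) (j : Idx) (hj : j.1 ≠ n) : inb n h j = 0 := by
  show (if hj' : j.1 = n then h (hj' ▸ j.2) else 0) = 0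
  rw [dif_neg hj]

lemma xblk_inb_same (n : ℕ) (h : Coord n → ℝ) : xblk (inb n h) n = h := by
  funext c
  exact inb_apply_same n h c

lemma xblk_inb_ne (n : ℕ) (h : Coord n → ℝ) (k : ℕ) (hk : k ≠ n) :
    xblk (inb n h) k = 0 := by
  funext c
  exact inb_apply_ne n h ⟨k, c⟩ hk

lemma znorm_inb (n : ℕ) (h : Coord n → ℝ) : znorm (inb n h) = Gn n h := by
  apply le_antisymm
  · refine znorm_le _ (fun k => ?_)
    by_cases hk : k = n
    · subst hk; rw [xblk_inb_same]
    · rw [xblk_inb_ne n h k hk, G_zero]; exact G_nonneg n h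
  · have := G_le_znorm (inb n h) n
    rwa [xblk_inb_same] at this

/-! ## operators on `Zspace` -/

noncomputable def coordCLM (j : Idx) : Zspace →L[ℝ] ℝ :=
  LinearMap.mkContinuous
    { toFun := fun z => (toC z) j
      map_add' := fun x y => rfl
      map_smul' := fun a x => rfl } 1
    (fun z => by
      rw [one_mul]
      show |(toC z) j| ≤ ‖z‖
      exact abs_apply_le_znorm (toC z) j)

lemma coordCLM_apply (j : Idx) (z : Zspace) : coordCLM j z = (toC z) j := rfl

lemma norm_coordCLM_le (j : Idx) : ‖coordCLM j‖ ≤ 1 :=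
  LinearMap.mkContinuous_norm_le _ (by norm_num) _

noncomputable def PmCLM (m : ℕ) : Zspace →L[ℝ] Zspace :=
  LinearMap.mkContinuous
    { toFun := fun z => ofC (truncC m (toC z))
      map_add' := fun x y => ZeroAtInftyContinuousMap.ext (fun j => by
        show truncC m (toC x + toC y) j = truncC m (toC x) j + truncC m (toC y) j
        rw [truncC_apply, truncC_apply, truncC_apply]
        by_cases h : j.1 < m <;> simp [h])
      map_smul' := fun a x => ZeroAtInftyContinuousMap.ext (fun j => by
        show truncC m (a • toC x) j = a • truncC m (toC x) j
        rw [truncC_apply, truncC_apply]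
        by_cases h : j.1 < m <;> simp [h]) } 1
    (fun z => by
      rw [one_mul]
      show znorm (truncC m (toC z)) ≤ ‖z‖
      exact znorm_truncC_le m (toC z))

lemma PmCLM_apply (m : ℕ) (z : Zspace) : toC (PmCLM m z) = truncC m (toC z) := rfl

noncomputable def inbZ (n : ℕ) (h : Coord n → ℝ) : Zspace := ofC (inb n h)

lemma norm_inbZ (n : ℕ) (h : Coord n → ℝ) : ‖inbZ n h‖ = Gn n h := znorm_inb n h

/-! ## finite sums of bumps -/

noncomputable def evec (j : Idx) : Zspace := ofC (ebump j)

noncomputable def Fm (m : ℕ) : Finset Idx :=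
  (Finset.range m).biUnion (fun n => Finset.univ.image (fun c : Coord n => (⟨n, c⟩ : Idx)))

lemma mem_Fm {m : ℕ} {j : Idx} : j ∈ Fm m ↔ j.1 < m := by
  obtain ⟨n, c⟩ := j
  constructor
  · intro hj
    obtain ⟨k, hk, hj2⟩ := Finset.mem_biUnion.mp hj
    obtain ⟨c', _, hc'⟩ := Finset.mem_image.mp hj2
    have hkn : k = n := congrArg Sigma.fst hc'
    subst hkn
    exact Finset.mem_range.mp hk
  · intro hn
    exact Finset.mem_biUnion.mpr ⟨n, Finset.mem_range.mpr hn,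
      Finset.mem_image.mpr ⟨c, Finset.mem_univ c, rfl⟩⟩

lemma coord_ext {a b : Zspace} (h : ∀ j, coordCLM j a = coordCLM j b) : a = b :=
  ZeroAtInftyContinuousMap.ext h

lemma coord_evec (i j : Idx) : coordCLM i (evec j) = if i = j then (1:ℝ) else 0 := rfl

lemma coord_sum (S : Finset Idx) (g : Idx → ℝ) (i : Idx) :
    coordCLM i (∑ j ∈ S, g j • evec j) = if i ∈ S then g i else 0 := by
  rw [map_sum]
  have hterm : ∀ j ∈ S, coordCLM i (g j • evec j) = if i = j then g j else 0 := by
    intro j _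
    rw [map_smul, coord_evec]
    by_cases h : i = j <;> simp [h]
  rw [Finset.sum_congr rfl hterm, Finset.sum_ite_eq S i g]

lemma Pm_eq_sum (m : ℕ) (z : Zspace) :
    PmCLM m z = ∑ j ∈ Fm m, (coordCLM j z) • evec j := by
  apply coord_ext
  intro i
  rw [coord_sum]
  show (truncC m (toC z)) i = _
  rw [truncC_apply]
  by_cases h : i.1 < m
  · rw [if_pos h, if_pos (mem_Fm.mpr h)]; rfl
  · rw [if_neg h, if_neg (fun hm => h (mem_Fm.mp hm))]

/-! ## the tail lemma for functionals -/

lemma opnorm_le_of_le {X : Type*} [NormedAddCommGroup X] [NormedSpace ℝ X]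
    (T : X →L[ℝ] ℝ) {C : ℝ} (hC : 0 ≤ C) (h : ∀ z, |T z| ≤ C * ‖z‖) : ‖T‖ ≤ C :=
  ContinuousLinearMap.opNorm_le_bound _ hC h

lemma func_tail (r : StrongDual ℝ Zspace) {ε : ℝ} (hε : 0 < ε) :
    ∃ m : ℕ, ‖r - r.comp (PmCLM m)‖ ≤ ε := by
  by_contra hcon
  push_neg at hcon
  have step : ∀ m : ℕ, ∃ (m' : ℕ) (w : Zspace), ‖w‖ ≤ 1 ∧
      (∀ n, n < m → xblk (toC w) n = 0) ∧ (∀ n, m' ≤ n → xblk (toC w) n = 0) ∧ ε/2 < r w := by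
    intro m
    have h1 := hcon m
    have h2 : ¬ (∀ z : Zspace, |(r - r.comp (PmCLM m)) z| ≤ ε * ‖z‖) := by
      intro hall
      exact absurd (opnorm_le_of_le _ (le_of_lt hε) hall) (not_le.mpr h1)
    push_neg at h2
    obtain ⟨u, hu⟩ := h2
    have hu0 : u ≠ 0 := by
      intro h0
      rw [h0] at hu
      simp at hu
    have hnu : 0 < ‖u‖ := norm_pos_iff.mpr hu0
    set v : Zspace := ‖u‖⁻¹ • u with hv
    have hv1 : ‖v‖ ≤ 1 := by
      rw [hv, norm_smul, norm_inv, norm_norm, inv_mul_cancel₀ (ne_of_gt hnu)]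
    have hvT : ε < |(r - r.comp (PmCLM m)) v| := by
      rw [hv, map_smul]
      rw [show ((‖u‖⁻¹ • ((r - r.comp (PmCLM m)) u) : ℝ)) = ‖u‖⁻¹ * ((r - r.comp (PmCLM m)) u) from rfl]
      rw [abs_mul, abs_of_nonneg (by positivity : (0:ℝ) ≤ ‖u‖⁻¹)]
      calc ε = (ε * ‖u‖) * ‖u‖⁻¹ := by field_simp
      _ < |(r - r.comp (PmCLM m)) u| * ‖u‖⁻¹ :=
          mul_lt_mul_of_pos_right hu (inv_pos.mpr hnu)
      _ = ‖u‖⁻¹ * |(r - r.comp (PmCLM m)) u| := mul_comm _ _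
    set a : Zspace := v - PmCLM m v with ha
    have hra : (r - r.comp (PmCLM m)) v = r a := by
      rw [ha, map_sub]
      rfl
    have hablk : ∀ n, n < m → xblk (toC a) n = 0 := by
      intro n hn
      rw [ha]
      show xblk (toC v - truncC m (toC v)) n = 0
      rw [xblk_sub, xblk_truncC, if_pos hn, sub_self]
    have hanorm : ‖a‖ ≤ 1 := by
      refine le_trans ?_ hv1
      show znorm (toC v - truncC m (toC v)) ≤ ‖v‖
      exact znorm_sub_truncC_le m (toC v)
    -- fix sign
    set w1 : Zspace := if 0 ≤ r a then a else -a with hw1def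
    have hw1norm : ‖w1‖ ≤ 1 := by
      rw [hw1def]
      split
      · exact hanorm
      · rwa [norm_neg]
    have hw1blk : ∀ n, n < m → xblk (toC w1) n = 0 := by
      intro n hn
      rw [hw1def]
      split
      · exact hablk n hn
      · show xblk (-(toC a)) n = 0
        rw [xblk_neg, hablk n hn, neg_zero]
    have hw1val : ε < r w1 := by
      rw [hw1def]
      rcases le_or_gt 0 (r a) with hsgn | hsgn
      · rw [if_pos hsgn]
        rw [hra] at hvT
        rwa [abs_of_nonneg hsgn] at hvT
      · rw [if_neg (not_le.mpr hsgn), map_neg]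
        rw [hra] at hvT
        rwa [abs_of_neg hsgn] at hvT
    -- truncate the tail of w1
    have hδ : (0:ℝ) < ε/(2*(‖r‖+1)) := by positivity
    obtain ⟨m'', hm''⟩ := tail_small (toC w1) hδ
    refine ⟨m'', PmCLM m'' w1, ?_, ?_, ?_, ?_⟩
    · calc ‖PmCLM m'' w1‖ = znorm (truncC m'' (toC w1)) := rfl
      _ ≤ znorm (toC w1) := znorm_truncC_le _ _
      _ ≤ 1 := hw1norm
    · intro n hn
      show xblk (truncC m'' (toC w1)) n = 0
      rw [xblk_truncC]
      by_cases h : n < m''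
      · rw [if_pos h]; exact hw1blk n hn
      · rw [if_neg h]
    · intro n hn
      show xblk (truncC m'' (toC w1)) n = 0
      rw [xblk_truncC, if_neg (not_lt.mpr hn)]
    · have hrest : |r (w1 - PmCLM m'' w1)| ≤ ε/2 := by
        calc |r (w1 - PmCLM m'' w1)| ≤ ‖r‖ * ‖w1 - PmCLM m'' w1‖ := r.le_opNorm _
        _ ≤ ‖r‖ * (ε/(2*(‖r‖+1))) := by
            apply mul_le_mul_of_nonneg_left _ (norm_nonneg r)
            exact hm''
        _ ≤ ε/2 := by
            have h0 : 0 ≤ ‖r‖ := norm_nonneg r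
            calc ‖r‖ * (ε / (2*(‖r‖+1))) = ε * (‖r‖ / (2*(‖r‖+1))) := by ring
            _ ≤ ε * (1/2) := by
                apply mul_le_mul_of_nonneg_left _ (le_of_lt hε)
                rw [div_le_div_iff₀ (by positivity) (by norm_num : (0:ℝ) < 2)]
                linarith
            _ = ε/2 := by ring
      have : r w1 - r (PmCLM m'' w1) = r (w1 - PmCLM m'' w1) := by rw [map_sub]
      have habs := abs_le.mp hrest
      linarith
  -- iterate the step
  have iter : ∀ N : ℕ, ∃ (m : ℕ) (x : Zspace), ‖x‖ ≤ 1 ∧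
      (∀ n, m ≤ n → xblk (toC x) n = 0) ∧ (N : ℝ) * (ε/2) ≤ r x := by
    intro N
    induction N with
    | zero =>
      refine ⟨0, 0, by simp, fun n _ => ?_, by simp⟩
      show xblk (toC (0:Zspace)) n = 0
      exact xblk_zero n
    | succ N ih =>
      obtain ⟨m, x, hx1, hx2, hx3⟩ := ih
      obtain ⟨m', w, hw1, hw2, hw3, hw4⟩ := step m
      refine ⟨max m m', x + w, ?_, ?_, ?_⟩
      · show znorm (toC x + toC w) ≤ 1
        refine znorm_le _ (fun n => ?_)
        rw [xblk_add]
        by_cases h : n < m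
        · rw [hw2 n h, add_zero]
          exact le_trans (G_le_znorm _ n) hx1
        · rw [hx2 n (not_lt.mp h), zero_add]
          exact le_trans (G_le_znorm _ n) hw1
      · intro n hn
        show xblk (toC x + toC w) n = 0
        rw [xblk_add, hx2 n (le_trans (le_max_left m m') hn),
          hw3 n (le_trans (le_max_right m m') hn), add_zero]
      · rw [map_add]
        push_cast
        nlinarith
  obtain ⟨N, hN⟩ := exists_nat_gt (‖r‖ / (ε/2))
  obtain ⟨m, x, hx1, _, hx3⟩ := iter N
  have hub : r x ≤ ‖r‖ := by
    calc r x ≤ |r x| := le_abs_self _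
    _ ≤ ‖r‖ * ‖x‖ := r.le_opNorm x
    _ ≤ ‖r‖ * 1 := mul_le_mul_of_nonneg_left hx1 (norm_nonneg r)
    _ = ‖r‖ := mul_one _
  have hε2 : (0:ℝ) < ε/2 := by linarith
  rw [div_lt_iff₀ hε2] at hN
  linarith

/-! ## the bidual norm formula -/

noncomputable def hatblk (Φ : StrongDual ℝ (StrongDual ℝ Zspace)) (n : ℕ) : Coord n → ℝ :=
  fun c => Φ (coordCLM ⟨n, c⟩)

lemma hat_le_norm (Φ : StrongDual ℝ (StrongDual ℝ Zspace)) (n : ℕ) : Gn n (hatblk Φ n) ≤ ‖Φ‖ := by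
  apply G_le_pairing
  intro φ hφ
  set rφ : StrongDual ℝ Zspace := ∑ c : Coord n, φ c • coordCLM ⟨n, c⟩ with hrφ
  have hrφ_apply : ∀ z : Zspace, rφ z = ∑ c : Coord n, φ c * (xblk (toC z) n) c := by
    intro z
    rw [hrφ, ContinuousLinearMap.sum_apply]
    exact Finset.sum_congr rfl (fun c _ => by rw [ContinuousLinearMap.smul_apply]; rfl)
  have hnorm : ‖rφ‖ ≤ 1 := by
    apply opnorm_le_of_le _ (by norm_num)
    intro z
    rw [one_mul, hrφ_apply]
    exact le_trans (hφ (xblk (toC z) n)) (G_le_znorm (toC z) n)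
  have hval : Φ rφ = ∑ c : Coord n, φ c * hatblk Φ n c := by
    rw [hrφ, map_sum]
    exact Finset.sum_congr rfl (fun c _ => by rw [map_smul]; rfl)
  calc |∑ c : Coord n, φ c * hatblk Φ n c| = |Φ rφ| := by rw [hval]
  _ ≤ ‖Φ‖ * ‖rφ‖ := Φ.le_opNorm rφ
  _ ≤ ‖Φ‖ * 1 := mul_le_mul_of_nonneg_left hnorm (norm_nonneg Φ)
  _ = ‖Φ‖ := mul_one _

lemma hat_bdd (Φ : StrongDual ℝ (StrongDual ℝ Zspace)) :
    BddAbove (Set.range fun n => Gn n (hatblk Φ n)) :=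
  ⟨‖Φ‖, by rintro - ⟨n, rfl⟩; exact hat_le_norm Φ n⟩

noncomputable def wmv (Φ : StrongDual ℝ (StrongDual ℝ Zspace)) (m : ℕ) : Zspace :=
  ∑ j ∈ Fm m, (Φ (coordCLM j)) • evec j

lemma xblk_wmv (Φ : StrongDual ℝ (StrongDual ℝ Zspace)) (m n : ℕ) :
    xblk (toC (wmv Φ m)) n = if n < m then hatblk Φ n else 0 := by
  funext c
  have h1 := coord_sum (Fm m) (fun j => Φ (coordCLM j)) ⟨n, c⟩
  have h2 : xblk (toC (wmv Φ m)) n c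
      = (coordCLM ⟨n, c⟩) (∑ j ∈ Fm m, Φ (coordCLM j) • evec j) := rfl
  rw [h2, h1]
  by_cases h : n < m
  · exact (if_pos (mem_Fm.mpr h : (⟨n, c⟩ : Idx) ∈ Fm m)).trans (by rw [if_pos h]; rfl)
  · exact (if_neg (fun (hm : (⟨n, c⟩ : Idx) ∈ Fm m) => h (mem_Fm.mp hm))).trans (by rw [if_neg h]; rfl)

lemma norm_wmv_le (Φ : StrongDual ℝ (StrongDual ℝ Zspace)) (m : ℕ) :
    ‖wmv Φ m‖ ≤ ⨆ n, Gn n (hatblk Φ n) := by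
  show znorm (toC (wmv Φ m)) ≤ _
  refine znorm_le _ (fun n => ?_)
  rw [show xblk (toC (wmv Φ m)) n = if n < m then hatblk Φ n else 0 from xblk_wmv Φ m n]
  by_cases h : n < m
  · rw [if_pos h]; exact le_ciSup (hat_bdd Φ) n
  · rw [if_neg h, G_zero]
    exact le_trans (G_nonneg 0 (hatblk Φ 0)) (le_ciSup (hat_bdd Φ) 0)

lemma Phi_comp_Pm (Φ : StrongDual ℝ (StrongDual ℝ Zspace)) (m : ℕ) (ρ : StrongDual ℝ Zspace) :
    Φ (ρ.comp (PmCLM m)) = ρ (wmv Φ m) := by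
  have h1 : ρ.comp (PmCLM m) = ∑ j ∈ Fm m, (ρ (evec j)) • coordCLM j := by
    apply ContinuousLinearMap.ext
    intro z
    rw [ContinuousLinearMap.comp_apply, ContinuousLinearMap.sum_apply]
    rw [Pm_eq_sum m z, map_sum]
    refine Finset.sum_congr rfl (fun j _ => ?_)
    rw [map_smul, ContinuousLinearMap.smul_apply]
    show (coordCLM j z) * (ρ (evec j)) = (ρ (evec j)) * (coordCLM j z)
    ring
  rw [h1, map_sum, wmv, map_sum]
  refine Finset.sum_congr rfl (fun j _ => ?_)
  rw [map_smul, map_smul]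
  show (ρ (evec j)) * Φ (coordCLM j) = Φ (coordCLM j) * ρ (evec j)
  ring

theorem bidual_norm_formula (Φ : StrongDual ℝ (StrongDual ℝ Zspace)) :
    ‖Φ‖ = ⨆ n, Gn n (hatblk Φ n) := by
  apply le_antisymm
  · set S := ⨆ n, Gn n (hatblk Φ n) with hS
    have hS0 : 0 ≤ S := le_trans (G_nonneg 0 (hatblk Φ 0)) (le_ciSup (hat_bdd Φ) 0)
    apply ContinuousLinearMap.opNorm_le_bound _ hS0
    intro ρ
    rw [Real.norm_eq_abs]
    have key : ∀ ε : ℝ, 0 < ε → |Φ ρ| ≤ S * ‖ρ‖ + (‖Φ‖ + 1) * ε := by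
      intro ε hε
      obtain ⟨m, hm⟩ := func_tail ρ hε
      have hsplit : Φ ρ = Φ (ρ.comp (PmCLM m)) + Φ (ρ - ρ.comp (PmCLM m)) := by
        rw [← map_add]
        congr 1
        abel
      rw [hsplit, Phi_comp_Pm]
      have h1 : |ρ (wmv Φ m)| ≤ ‖ρ‖ * S :=
        le_trans (ρ.le_opNorm _) (mul_le_mul_of_nonneg_left (norm_wmv_le Φ m) (norm_nonneg ρ))
      have h2 : |Φ (ρ - ρ.comp (PmCLM m))| ≤ ‖Φ‖ * ε :=
        le_trans (Φ.le_opNorm _) (mul_le_mul_of_nonneg_left hm (norm_nonneg Φ))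
      have h3 : ‖Φ‖ * ε ≤ (‖Φ‖ + 1) * ε :=
        mul_le_mul_of_nonneg_right (by linarith [norm_nonneg Φ]) (le_of_lt hε)
      calc |ρ (wmv Φ m) + Φ (ρ - ρ.comp (PmCLM m))|
          ≤ |ρ (wmv Φ m)| + |Φ (ρ - ρ.comp (PmCLM m))| := abs_add_le _ _
      _ ≤ ‖ρ‖ * S + ‖Φ‖ * ε := add_le_add h1 h2
      _ ≤ S * ‖ρ‖ + (‖Φ‖ + 1) * ε := by rw [mul_comm]; linarith
    by_contra hcon
    push_neg at hcon
    have hgap : 0 < |Φ ρ| - S * ‖ρ‖ := by linarith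
    have hpos : 0 < (|Φ ρ| - S * ‖ρ‖) / (2 * (‖Φ‖ + 1)) := by positivity
    have hk := key _ hpos
    have hΦ1 : 0 < ‖Φ‖ + 1 := by linarith [norm_nonneg Φ]
    have : (‖Φ‖ + 1) * ((|Φ ρ| - S * ‖ρ‖) / (2 * (‖Φ‖ + 1))) = (|Φ ρ| - S * ‖ρ‖)/2 := by
      field_simp
    rw [this] at hk
    linarith
  · exact ciSup_le (hat_le_norm Φ)

/-! ## almost squareness of the bidual -/

lemma hat_add (Φ Ψ : StrongDual ℝ (StrongDual ℝ Zspace)) (n : ℕ) :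
    hatblk (Φ + Ψ) n = hatblk Φ n + hatblk Ψ n := rfl

lemma hat_sub (Φ Ψ : StrongDual ℝ (StrongDual ℝ Zspace)) (n : ℕ) :
    hatblk (Φ - Ψ) n = hatblk Φ n - hatblk Ψ n := rfl

lemma hat_incl (z : Zspace) (n : ℕ) :
    hatblk (inclusionInDoubleDual ℝ Zspace z) n = xblk (toC z) n := by
  funext c
  show inclusionInDoubleDual ℝ Zspace z (coordCLM ⟨n, c⟩) = _
  rw [dual_def]
  rfl

theorem asq_Zbidual : IsASQ (StrongDual ℝ (StrongDual ℝ Zspace)) := by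
  intro ε hε K x hx
  obtain ⟨N0, hN0⟩ := exists_nat_gt (4/ε)
  set N := max K N0 with hNdef
  have hK : K ≤ N + 1 := le_trans (le_max_left _ _) (Nat.le_succ _)
  have hδ : 4 / (tb N : ℝ) ≤ ε := by
    have h2 : (N0:ℝ) ≤ (tb N : ℝ) := by
      have : N0 ≤ tb N := by unfold tb; omega
      exact_mod_cast this
    have h3 : 4/ε < (tb N : ℝ) := lt_of_lt_of_le hN0 h2
    rw [div_lt_iff₀ hε] at h3
    rw [div_le_iff₀ (tb_pos N)]
    linarith [mul_comm ε (tb N : ℝ)]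
  set f : Fin K → (Coord N → ℝ) := fun i => hatblk (x i) N with hfdef
  have hf : ∀ i, Gn N (f i) ≤ 1 := fun i => by
    rw [show (1:ℝ) = ‖x i‖ from (hx i).symm]
    exact hat_le_norm (x i) N
  obtain ⟨h, hGh, hbound⟩ := local_asq N K hK f hf
  set H : StrongDual ℝ (StrongDual ℝ Zspace) := inclusionInDoubleDual ℝ Zspace (inbZ N h) with hHdef
  have hHnorm : ‖H‖ = 1 := by
    rw [hHdef]
    rw [show inclusionInDoubleDual ℝ Zspace (inbZ N h)
        = inclusionInDoubleDualLi ℝ (inbZ N h) from rfl]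
    rw [(inclusionInDoubleDualLi ℝ (E := Zspace)).norm_map (inbZ N h)]
    rw [norm_inbZ, hGh]
  have hhatH : ∀ k, hatblk H k = xblk (inb N h) k := fun k => hat_incl (inbZ N h) k
  refine ⟨H, hHnorm, fun i => ⟨?_, ?_⟩⟩
  · rw [bidual_norm_formula]
    refine ciSup_le (fun k => ?_)
    rw [hat_add]
    by_cases hk : k = N
    · subst hk
      rw [hhatH N, xblk_inb_same]
      calc Gn N (hatblk (x i) N + h) ≤ 1 + 4/(tb N : ℝ) := (hbound i).1
      _ ≤ 1 + ε := by linarith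
    · rw [hhatH k, xblk_inb_ne N h k hk, add_zero]
      calc Gn k (hatblk (x i) k) ≤ ‖x i‖ := hat_le_norm (x i) k
      _ = 1 := hx i
      _ ≤ 1 + ε := by linarith
  · rw [bidual_norm_formula]
    refine ciSup_le (fun k => ?_)
    rw [hat_sub]
    by_cases hk : k = N
    · subst hk
      rw [hhatH N, xblk_inb_same]
      calc Gn N (hatblk (x i) N - h) ≤ 1 + 4/(tb N : ℝ) := (hbound i).2
      _ ≤ 1 + ε := by linarith
    · rw [hhatH k, xblk_inb_ne N h k hk, sub_zero]
      calc Gn k (hatblk (x i) k) ≤ ‖x i‖ := hat_le_norm (x i) k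
      _ = 1 := hx i
      _ ≤ 1 + ε := by linarith

/-! ## M-embeddedness -/

lemma exists_approx {X : Type*} [NormedAddCommGroup X] [NormedSpace ℝ X]
    (g : X →L[ℝ] ℝ) {ε : ℝ} (hε : 0 < ε) : ∃ u : X, ‖u‖ ≤ 1 ∧ ‖g‖ - ε < g u := by
  rcases lt_or_ge ‖g‖ ε with hlt | hge
  · refine ⟨0, by simp, ?_⟩
    rw [map_zero]
    linarith
  · have h0 : 0 ≤ ‖g‖ - ε := by linarith
    have hne : ¬ ‖g‖ ≤ ‖g‖ - ε := by linarith
    have h2 : ¬ ∀ z, |g z| ≤ (‖g‖ - ε) * ‖z‖ := fun hall => hne (opnorm_le_of_le g h0 hall)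
    push_neg at h2
    obtain ⟨u, hu⟩ := h2
    have hu0 : u ≠ 0 := by
      intro h
      rw [h] at hu
      simp at hu
    have hnu : 0 < ‖u‖ := norm_pos_iff.mpr hu0
    set v : X := ‖u‖⁻¹ • u with hv
    have hv1 : ‖v‖ ≤ 1 := by
      rw [hv, norm_smul, norm_inv, norm_norm, inv_mul_cancel₀ (ne_of_gt hnu)]
    have hvval : ‖g‖ - ε < |g v| := by
      rw [hv, map_smul]
      rw [show ((‖u‖⁻¹ • (g u) : ℝ)) = ‖u‖⁻¹ * (g u) from rfl]
      rw [abs_mul, abs_of_nonneg (by positivity : (0:ℝ) ≤ ‖u‖⁻¹)]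
      calc ‖g‖ - ε = ((‖g‖ - ε) * ‖u‖) * ‖u‖⁻¹ := by field_simp
      _ < |g u| * ‖u‖⁻¹ := mul_lt_mul_of_pos_right hu (inv_pos.mpr hnu)
      _ = ‖u‖⁻¹ * |g u| := mul_comm _ _
    rcases le_or_gt 0 (g v) with hsgn | hsgn
    · exact ⟨v, hv1, by rwa [abs_of_nonneg hsgn] at hvval⟩
    · refine ⟨-v, by rwa [norm_neg], ?_⟩
      rw [map_neg]
      rwa [abs_of_neg hsgn] at hvval

/-- precomposition with the truncation -/
noncomputable def SmCLM (m : ℕ) : StrongDual ℝ Zspace →L[ℝ] StrongDual ℝ Zspace :=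
  LinearMap.mkContinuous
    { toFun := fun ρ => ρ.comp (PmCLM m)
      map_add' := fun ρ σ => ContinuousLinearMap.add_comp _ _ _
      map_smul' := fun a ρ => ContinuousLinearMap.smul_comp _ _ _ } 1
    (fun ρ => by
      rw [one_mul]
      apply opnorm_le_of_le _ (norm_nonneg ρ)
      intro z
      calc |ρ.comp (PmCLM m) z| = |ρ (PmCLM m z)| := rfl
      _ ≤ ‖ρ‖ * ‖PmCLM m z‖ := ρ.le_opNorm _
      _ ≤ ‖ρ‖ * ‖z‖ := by
          apply mul_le_mul_of_nonneg_left _ (norm_nonneg ρ)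
          show znorm (truncC m (toC z)) ≤ ‖z‖
          exact znorm_truncC_le m (toC z))

lemma SmCLM_apply (m : ℕ) (ρ : StrongDual ℝ Zspace) : SmCLM m ρ = ρ.comp (PmCLM m) := rfl

/-- the `ℓ₁`-splitting of functionals induced by truncations -/
lemma Lsplit (m : ℕ) (ρ : StrongDual ℝ Zspace) :
    ‖ρ.comp (PmCLM m)‖ + ‖ρ - ρ.comp (PmCLM m)‖ ≤ ‖ρ‖ := by
  apply le_of_forall_pos_le_add
  intro ε hε
  obtain ⟨a, ha1, ha2⟩ := exists_approx (ρ.comp (PmCLM m)) (half_pos hε)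
  obtain ⟨b, hb1, hb2⟩ := exists_approx (ρ - ρ.comp (PmCLM m)) (half_pos hε)
  have hval : (ρ.comp (PmCLM m)) a + (ρ - ρ.comp (PmCLM m)) b
      = ρ (PmCLM m a + (b - PmCLM m b)) := by
    simp only [ContinuousLinearMap.sub_apply, ContinuousLinearMap.comp_apply, map_add, map_sub]
  have hnrm : ‖PmCLM m a + (b - PmCLM m b)‖ ≤ 1 := by
    have h1 : ‖PmCLM m a + (b - PmCLM m b)‖
        = znorm (truncC m (toC a) + (toC b - truncC m (toC b))) := rfl
    rw [h1]
    exact le_trans (znorm_split m (toC a) (toC b)) (max_le ha1 hb1)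
  have hρ : ρ (PmCLM m a + (b - PmCLM m b)) ≤ ‖ρ‖ := by
    calc ρ (PmCLM m a + (b - PmCLM m b)) ≤ |ρ (PmCLM m a + (b - PmCLM m b))| := le_abs_self _
    _ ≤ ‖ρ‖ * ‖PmCLM m a + (b - PmCLM m b)‖ := ρ.le_opNorm _
    _ ≤ ‖ρ‖ * 1 := mul_le_mul_of_nonneg_left hnrm (norm_nonneg ρ)
    _ = ‖ρ‖ := mul_one _
  have := hval ▸ hρ
  linarith

/-- the restriction operator `Z*** → Z*` -/
noncomputable def RRm : StrongDual ℝ (StrongDual ℝ (StrongDual ℝ Zspace)) →L[ℝ] StrongDual ℝ Zspace :=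
  LinearMap.mkContinuous
    { toFun := fun ξ => ξ.comp (inclusionInDoubleDual ℝ Zspace)
      map_add' := fun ξ η => ContinuousLinearMap.add_comp _ _ _
      map_smul' := fun a ξ => ContinuousLinearMap.smul_comp _ _ _ } 1
    (fun ξ => by
      rw [one_mul]
      exact ContinuousLinearMap.opNorm_le_bound _ (norm_nonneg ξ) (fun z => by
        calc ‖ξ (inclusionInDoubleDual ℝ Zspace z)‖ ≤ ‖ξ‖ * ‖inclusionInDoubleDual ℝ Zspace z‖ := by
              exact ContinuousLinearMap.le_opNorm (𝕜 := ℝ) (𝕜₂ := ℝ) (σ₁₂ := RingHom.id ℝ) (E := StrongDual ℝ (StrongDual ℝ Zspace)) (F := ℝ) ξ (inclusionInDoubleDual ℝ Zspace z)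
        _ ≤ ‖ξ‖ * ‖z‖ := mul_le_mul_of_nonneg_left (double_dual_bound ℝ Zspace z) (norm_nonneg ξ)))

/-- the Dixmier projection on `Z***` -/
noncomputable def PPm : StrongDual ℝ (StrongDual ℝ (StrongDual ℝ Zspace)) →L[ℝ] StrongDual ℝ (StrongDual ℝ (StrongDual ℝ Zspace)) :=
  (inclusionInDoubleDual ℝ (StrongDual ℝ Zspace)).comp RRm

lemma RRm_apply (ξ : StrongDual ℝ (StrongDual ℝ (StrongDual ℝ Zspace))) :
    RRm ξ = ξ.comp (inclusionInDoubleDual ℝ Zspace) := rfl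

lemma PPm_apply (ξ : StrongDual ℝ (StrongDual ℝ (StrongDual ℝ Zspace))) :
    PPm ξ = inclusionInDoubleDual ℝ (StrongDual ℝ Zspace) (RRm ξ) := rfl

lemma RRm_incl (η : StrongDual ℝ Zspace) :
    RRm (inclusionInDoubleDual ℝ (StrongDual ℝ Zspace) η) = η := by
  apply ContinuousLinearMap.ext
  intro z
  show (inclusionInDoubleDual ℝ (StrongDual ℝ Zspace) η) (inclusionInDoubleDual ℝ Zspace z) = η z
  rw [dual_def, dual_def]

lemma norm_PPm (ξ : StrongDual ℝ (StrongDual ℝ (StrongDual ℝ Zspace))) : ‖PPm ξ‖ = ‖RRm ξ‖ := by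
  rw [PPm_apply]
  rw [show inclusionInDoubleDual ℝ (StrongDual ℝ Zspace) (RRm ξ)
      = inclusionInDoubleDualLi ℝ (RRm ξ) from rfl]
  exact (inclusionInDoubleDualLi ℝ (E := StrongDual ℝ Zspace)).norm_map (RRm ξ)

theorem Pnorm_eq (ξ : StrongDual ℝ (StrongDual ℝ (StrongDual ℝ Zspace))) :
    ‖ξ‖ = ‖PPm ξ‖ + ‖ξ - PPm ξ‖ := by
  apply le_antisymm
  · calc ‖ξ‖ = ‖PPm ξ + (ξ - PPm ξ)‖ := by congr 1; abel
    _ ≤ ‖PPm ξ‖ + ‖ξ - PPm ξ‖ := norm_add_le _ _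
  · set r : StrongDual ℝ Zspace := RRm ξ with hr
    set s : StrongDual ℝ (StrongDual ℝ (StrongDual ℝ Zspace)) := ξ - PPm ξ with hs
    have hrz : ∀ z : Zspace, r z = ξ (inclusionInDoubleDual ℝ Zspace z) := fun z => rfl
    have hs_incl : ∀ z' : Zspace, s (inclusionInDoubleDual ℝ Zspace z') = 0 := by
      intro z'
      rw [hs, show (ξ - PPm ξ) (inclusionInDoubleDual ℝ Zspace z') = ξ (inclusionInDoubleDual ℝ Zspace z') - PPm ξ (inclusionInDoubleDual ℝ Zspace z') from rfl, PPm_apply, dual_def, dual_def, ← hr, hrz z',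
        sub_self]
    rw [norm_PPm, ← hr]
    apply le_of_forall_pos_le_add
    intro ε4 hε4
    set ε : ℝ := ε4/4 with hεdef
    have hε : 0 < ε := by rw [hεdef]; linarith
    obtain ⟨Φ, hΦ1, hΦ2⟩ := exists_approx (X := StrongDual ℝ (StrongDual ℝ Zspace)) s hε
    obtain ⟨z, hz1, hz2⟩ := exists_approx r hε
    obtain ⟨m, hm⟩ := func_tail r hε
    set Ψ : StrongDual ℝ (StrongDual ℝ Zspace) :=
      inclusionInDoubleDual ℝ Zspace (PmCLM m z)
        + Φ.comp (ContinuousLinearMap.id ℝ (StrongDual ℝ Zspace) - SmCLM m) with hΨ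
    have happ : ∀ ρ : StrongDual ℝ Zspace,
        Ψ ρ = (ρ.comp (PmCLM m)) z + Φ (ρ - ρ.comp (PmCLM m)) := fun ρ => rfl
    have hΨnorm : ‖Ψ‖ ≤ 1 := by
      apply opnorm_le_of_le _ (by norm_num)
      intro ρ
      rw [one_mul, happ ρ]
      have h1 : |(ρ.comp (PmCLM m)) z| ≤ ‖ρ.comp (PmCLM m)‖ := by
        calc |(ρ.comp (PmCLM m)) z| ≤ ‖ρ.comp (PmCLM m)‖ * ‖z‖ :=
              (ρ.comp (PmCLM m)).le_opNorm z
        _ ≤ ‖ρ.comp (PmCLM m)‖ * 1 := mul_le_mul_of_nonneg_left hz1 (norm_nonneg _)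
        _ = _ := mul_one _
      have h2 : |Φ (ρ - ρ.comp (PmCLM m))| ≤ ‖ρ - ρ.comp (PmCLM m)‖ := by
        calc |Φ (ρ - ρ.comp (PmCLM m))| ≤ ‖Φ‖ * ‖ρ - ρ.comp (PmCLM m)‖ := Φ.le_opNorm _
        _ ≤ 1 * ‖ρ - ρ.comp (PmCLM m)‖ := mul_le_mul_of_nonneg_right hΦ1 (norm_nonneg _)
        _ = _ := one_mul _
      calc |(ρ.comp (PmCLM m)) z + Φ (ρ - ρ.comp (PmCLM m))|
          ≤ |(ρ.comp (PmCLM m)) z| + |Φ (ρ - ρ.comp (PmCLM m))| := abs_add_le _ _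
      _ ≤ ‖ρ.comp (PmCLM m)‖ + ‖ρ - ρ.comp (PmCLM m)‖ := add_le_add h1 h2
      _ ≤ ‖ρ‖ := Lsplit m ρ
    have hsΨ : s Ψ = s Φ := by
      rw [hΨ, map_add]
      rw [hs_incl (PmCLM m z), zero_add]
      have hfactor : Φ.comp (ContinuousLinearMap.id ℝ (StrongDual ℝ Zspace) - SmCLM m)
          = Φ - Φ.comp (SmCLM m) := by
        rw [ContinuousLinearMap.comp_sub, ContinuousLinearMap.comp_id]
      rw [hfactor, show s (Φ - Φ.comp (SmCLM m)) = s Φ - s (Φ.comp (SmCLM m)) from map_sub s _ _]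
      have hSm : Φ.comp (SmCLM m) = inclusionInDoubleDual ℝ Zspace (wmv Φ m) := by
        apply ContinuousLinearMap.ext
        intro ρ
        show Φ (SmCLM m ρ) = _
        rw [SmCLM_apply, Phi_comp_Pm, dual_def]
      rw [hSm, hs_incl (wmv Φ m), sub_zero]
    have hPΨ : (PPm ξ) Ψ = Ψ r := by rw [PPm_apply, dual_def, hr]
    have hξΨ : ξ Ψ = (PPm ξ) Ψ + s Ψ := by
      rw [hs, show (ξ - PPm ξ) Ψ = ξ Ψ - PPm ξ Ψ from rfl]
      ring
    have hb1 : ‖r‖ - 2*ε ≤ (r.comp (PmCLM m)) z := by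
      have he : (r.comp (PmCLM m)) z = r z - (r - r.comp (PmCLM m)) z := by
        rw [ContinuousLinearMap.sub_apply]
        ring
      have habs : |(r - r.comp (PmCLM m)) z| ≤ ε := by
        calc |(r - r.comp (PmCLM m)) z| ≤ ‖r - r.comp (PmCLM m)‖ * ‖z‖ :=
              (r - r.comp (PmCLM m)).le_opNorm z
        _ ≤ ε * 1 := mul_le_mul hm hz1 (norm_nonneg z) (le_of_lt hε)
        _ = ε := mul_one _
      have hab := abs_le.mp habs
      rw [he]
      linarith
    have hb2 : -ε ≤ Φ (r - r.comp (PmCLM m)) := by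
      have habs : |Φ (r - r.comp (PmCLM m))| ≤ ε := by
        calc |Φ (r - r.comp (PmCLM m))| ≤ ‖Φ‖ * ‖r - r.comp (PmCLM m)‖ := Φ.le_opNorm _
        _ ≤ 1 * ε := mul_le_mul hΦ1 hm (norm_nonneg _) (by norm_num)
        _ = ε := one_mul _
      linarith [(abs_le.mp habs).1]
    have hup : ξ Ψ ≤ ‖ξ‖ := by
      calc ξ Ψ ≤ |ξ Ψ| := le_abs_self _
      _ ≤ ‖ξ‖ * ‖Ψ‖ := by exact ContinuousLinearMap.le_opNorm (𝕜 := ℝ) (𝕜₂ := ℝ) (σ₁₂ := RingHom.id ℝ) (E := StrongDual ℝ (StrongDual ℝ Zspace)) (F := ℝ) ξ Ψ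
      _ ≤ ‖ξ‖ * 1 := mul_le_mul_of_nonneg_left hΨnorm (norm_nonneg ξ)
      _ = ‖ξ‖ := mul_one _
    have hΨr : Ψ r = (r.comp (PmCLM m)) z + Φ (r - r.comp (PmCLM m)) := happ r
    have hfin : ‖r‖ + ‖s‖ - 4*ε ≤ ξ Ψ := by
      rw [hξΨ, hPΨ, hΨr, hsΨ]
      linarith [hΦ2]
    rw [hεdef] at hfin
    linarith

/-! ## properties of the Dixmier projection -/

lemma incl_injective : Function.Injective (inclusionInDoubleDual ℝ (StrongDual ℝ Zspace)) :=
  fun a b h => (inclusionInDoubleDualLi ℝ (E := StrongDual ℝ Zspace)).injective h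

theorem PPm_idem (ξ : StrongDual ℝ (StrongDual ℝ (StrongDual ℝ Zspace))) : PPm (PPm ξ) = PPm ξ := by
  calc PPm (PPm ξ) = inclusionInDoubleDual ℝ (StrongDual ℝ Zspace) (RRm (PPm ξ)) := rfl
  _ = inclusionInDoubleDual ℝ (StrongDual ℝ Zspace) (RRm ξ) := by rw [PPm_apply, RRm_incl]
  _ = PPm ξ := rfl

theorem PPm_range :
    Set.range PPm = Set.range (inclusionInDoubleDual ℝ (StrongDual ℝ Zspace)) := by
  ext ζ
  constructor
  · rintro ⟨ξ, rfl⟩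
    exact ⟨RRm ξ, (PPm_apply ξ).symm⟩
  · rintro ⟨η, rfl⟩
    refine ⟨inclusionInDoubleDual ℝ (StrongDual ℝ Zspace) η, ?_⟩
    rw [PPm_apply, RRm_incl]

theorem PPm_ker (ξ : StrongDual ℝ (StrongDual ℝ (StrongDual ℝ Zspace))) :
    PPm ξ = 0 ↔ ∀ z : Zspace, ξ (inclusionInDoubleDual ℝ Zspace z) = 0 := by
  constructor
  · intro h z
    have h0 : RRm ξ = 0 := by
      apply incl_injective
      rw [← PPm_apply, h, map_zero]
    calc ξ (inclusionInDoubleDual ℝ Zspace z) = (RRm ξ) z := rfl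
    _ = 0 := by rw [h0]; rfl
  · intro h
    have h0 : RRm ξ = 0 := ContinuousLinearMap.ext (fun z => h z)
    rw [PPm_apply, h0, map_zero]

end ASQC


/-- There is an equivalent norm on `c_0`, i.e. a Banach space `Z` isomorphic to
`c_0`, such that `Z` is M-embedded (an M-ideal in its bidual, witnessed by an
`ℓ_1`-projection of `Z***` onto the canonical copy of `Z*` along the
annihilator `Z^⊥` of `Z`) and the bidual `Z**` is almost square. -/
theorem exists_M_embedded_ASQ_bidual_renorming_of_c0 :
    ∃ (Z : Type) (_ : NormedAddCommGroup Z) (_ : NormedSpace ℝ Z)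
      (_ : CompleteSpace Z),
      Nonempty (C₀(ℕ, ℝ) ≃L[ℝ] Z) ∧
      (∃ P : StrongDual ℝ (StrongDual ℝ (StrongDual ℝ Z)) →L[ℝ] StrongDual ℝ (StrongDual ℝ (StrongDual ℝ Z)),
        (∀ ξ, P (P ξ) = P ξ) ∧
        Set.range P = Set.range (inclusionInDoubleDual ℝ (StrongDual ℝ Z)) ∧
        (∀ ξ, P ξ = 0 ↔ ∀ z : Z, ξ (inclusionInDoubleDual ℝ Z z) = 0) ∧
        (∀ ξ, ‖ξ‖ = ‖P ξ‖ + ‖ξ - P ξ‖)) ∧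
      IsASQ (StrongDual ℝ (StrongDual ℝ Z)) := by
  exact ⟨ASQC.Zspace, inferInstance, inferInstance, inferInstance, ⟨ASQC.c0EquivZ⟩,
    ⟨ASQC.PPm, ASQC.PPm_idem, ASQC.PPm_range, ASQC.PPm_ker, ASQC.Pnorm_eq⟩,
    ASQC.asq_Zbidual⟩
end
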